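/- arXiv:2303.16699 — 4 statements merged into one kernel-verified Lean document; each statement's English description precedes it below -/
import Mathlib

section
/- For every stretch-invariant HyperLTL sentence φ over AP ∪ {o} there exists a HyperLTL sentence φ~ with the same quantifier prefix, whose quantifier-free part is a Boolean combination of formulas of the form a_π (a ∈ AP ∪ {o}) and F(o_π ∧ F o_{π'}), such that for every finite word w over 2^AP and every stretch function f: enc(w,f) ⊨ φ if and only if enc(w,f) ⊨ φ~. -/
/-! ### HyperLTL: syntax and semantics -/

/-- A trace over a set `AP` of atomic propositions. -/
abbrev Trace (AP : Type) : Type := ℕ → Set AP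

/-- The suffix of a trace from position `j` onwards. -/
def Trace.shift {AP : Type} (t : Trace AP) (j : ℕ) : Trace AP := fun i => t (i + j)

/-- Quantifier-free HyperLTL formulas; trace variables are natural numbers. -/
inductive QF (AP : Type) : Type where
  | atom : AP → ℕ → QF AP
  | neg  : QF AP → QF AP
  | disj : QF AP → QF AP → QF AP
  | next : QF AP → QF AP
  | untl : QF AP → QF AP → QF AP

/-- HyperLTL formulas: a block of trace quantifiers followed by a
quantifier-free formula (HyperLTL formulas are in prenex normal form). -/
inductive HFormula (AP : Type) : Type where
  | ex  : ℕ → HFormula AP → HFormula AP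
  | all : ℕ → HFormula AP → HFormula AP
  | qf  : QF AP → HFormula AP

/-- The simultaneous shift of a trace assignment. -/
def shiftAsg {AP : Type} (As : ℕ → Trace AP) (j : ℕ) : ℕ → Trace AP :=
  fun x => Trace.shift (As x) j

/-- Semantics of quantifier-free HyperLTL formulas w.r.t. a trace assignment. -/
def QF.sat {AP : Type} : QF AP → (ℕ → Trace AP) → Prop
  | .atom a x, As => a ∈ As x 0
  | .neg ψ, As => ¬ ψ.sat As
  | .disj ψ₁ ψ₂, As => ψ₁.sat As ∨ ψ₂.sat As
  | .next ψ, As => ψ.sat (shiftAsg As 1)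
  | .untl ψ₁ ψ₂, As => ∃ j, ψ₂.sat (shiftAsg As j) ∧ ∀ j' < j, ψ₁.sat (shiftAsg As j')

/-- Semantics of HyperLTL formulas w.r.t. a set of traces and a trace assignment. -/
def HFormula.sat {AP : Type} : HFormula AP → Set (Trace AP) → (ℕ → Trace AP) → Prop
  | .ex x φ, T, As => ∃ t ∈ T, φ.sat T (Function.update As x t)
  | .all x φ, T, As => ∀ t ∈ T, φ.sat T (Function.update As x t)
  | .qf ψ, _, As => ψ.sat As

def QF.freeVars {AP : Type} : QF AP → Set ℕ
  | .atom _ x => {x}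
  | .neg ψ => ψ.freeVars
  | .disj ψ₁ ψ₂ => ψ₁.freeVars ∪ ψ₂.freeVars
  | .next ψ => ψ.freeVars
  | .untl ψ₁ ψ₂ => ψ₁.freeVars ∪ ψ₂.freeVars

def HFormula.freeVars {AP : Type} : HFormula AP → Set ℕ
  | .ex x φ => φ.freeVars \ {x}
  | .all x φ => φ.freeVars \ {x}
  | .qf ψ => ψ.freeVars

/-- A sentence is a formula without free variables. -/
def HFormula.IsSentence {AP : Type} (φ : HFormula AP) : Prop := φ.freeVars = ∅

/-- `T` is a model of `φ` (for sentences the initial assignment is irrelevant). -/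
def HModels {AP : Type} (T : Set (Trace AP)) (φ : HFormula AP) : Prop :=
  φ.sat T (fun _ _ => ∅)

/-- A HyperLTL sentence is satisfiable if it has a model. -/
def HSatisfiable {AP : Type} (φ : HFormula AP) : Prop := ∃ T, HModels T φ

/-! ### Finite words, stretch functions, and encodings of words as trace sets -/

/-- A finite word over `2^AP`: only letters at positions `< len` are relevant. -/
structure FinWord (AP : Type) : Type where
  len : ℕ
  letter : ℕ → Set AP

/-- A stretch function is strictly monotone with positive first value. -/
def IsStretch (f : ℕ → ℕ) : Prop := StrictMono f ∧ 0 < f 0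

/-- The trace encoding position `n` of the word `w`, w.r.t. the stretch function `f`.
The fresh proposition `o` is represented by `none`. -/
def encTrace {AP : Type} (w : FinWord AP) (f : ℕ → ℕ) (n : ℕ) : Trace (Option AP) :=
  fun i => {x | (∃ a : AP, x = some a ∧ i = 0 ∧ a ∈ w.letter n) ∨ (x = none ∧ i = f n)}

/-- The encoding `enc(w, f)` of a finite word `w` as a set of traces. -/
def encSet {AP : Type} (w : FinWord AP) (f : ℕ → ℕ) : Set (Trace (Option AP)) :=
  {t | ∃ n, n < w.len ∧ t = encTrace w f n}

/-- The derived eventually operator `F ψ` (as `(ψ ∨ ¬ψ) U ψ`). -/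
def QF.ev {AP : Type} (ψ : QF AP) : QF AP := .untl (.disj ψ (.neg ψ)) ψ

/-- Conjunction, derived from negation and disjunction. -/
def QF.conj {AP : Type} (ψ₁ ψ₂ : QF AP) : QF AP := .neg (.disj (.neg ψ₁) (.neg ψ₂))

/-- The formula `F(o_x ∧ F o_y)`. -/
def leHat {AP : Type} (x y : ℕ) : QF (Option AP) :=
  QF.ev (QF.conj (.atom none x) (QF.ev (.atom none y)))

/-- Boolean combinations of formulas of the form `a_π` and `F(o_π ∧ F o_π')`. -/
inductive SimpleQF {AP : Type} : QF (Option AP) → Prop where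
  | atom (a : Option AP) (x : ℕ) : SimpleQF (.atom a x)
  | le (x y : ℕ) : SimpleQF (leHat x y)
  | neg {ψ} : SimpleQF ψ → SimpleQF (.neg ψ)
  | disj {ψ₁ ψ₂} : SimpleQF ψ₁ → SimpleQF ψ₂ → SimpleQF (.disj ψ₁ ψ₂)

/-- Two HyperLTL formulas have the same quantifier prefix. -/
def SamePrefix {AP : Type} : HFormula AP → HFormula AP → Prop
  | .ex x φ, .ex y ψ => x = y ∧ SamePrefix φ ψ
  | .all x φ, .all y ψ => x = y ∧ SamePrefix φ ψ
  | .qf _, .qf _ => True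
  | _, _ => False

/-- The quantifier-free part is a Boolean combination of formulas `a_π` and
`F(o_π ∧ F o_π')`. -/
def SimpleBody {AP : Type} : HFormula (Option AP) → Prop
  | .ex _ φ => SimpleBody φ
  | .all _ φ => SimpleBody φ
  | .qf ψ => SimpleQF ψ

/-- A HyperLTL sentence is stretch-invariant. -/
def StretchInvariant {AP : Type} (φ : HFormula (Option AP)) : Prop :=
  ∀ (w : FinWord AP) (f g : ℕ → ℕ), IsStretch f → IsStretch g →
    (HModels (encSet w f) φ ↔ HModels (encSet w g) φ)

namespace Stretchy

variable {AP : Type}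

/-- finite set of free variables -/
def fvsQ : QF AP → Finset ℕ
  | .atom _ x => {x}
  | .neg ψ => fvsQ ψ
  | .disj ψ₁ ψ₂ => fvsQ ψ₁ ∪ fvsQ ψ₂
  | .next ψ => fvsQ ψ
  | .untl ψ₁ ψ₂ => fvsQ ψ₁ ∪ fvsQ ψ₂

lemma mem_fvsQ (ψ : QF AP) (x : ℕ) : x ∈ fvsQ ψ ↔ x ∈ ψ.freeVars := by
  induction ψ with
  | atom a y => simp [fvsQ, QF.freeVars]
  | neg ψ ih => simpa [fvsQ, QF.freeVars] using ih
  | disj ψ₁ ψ₂ ih1 ih2 => simp [fvsQ, QF.freeVars, ih1, ih2]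
  | next ψ ih => simpa [fvsQ, QF.freeVars] using ih
  | untl ψ₁ ψ₂ ih1 ih2 => simp [fvsQ, QF.freeVars, ih1, ih2]

lemma fvsQ_nonempty (ψ : QF AP) : (fvsQ ψ).Nonempty := by
  induction ψ with
  | atom a y => exact ⟨y, by simp [fvsQ]⟩
  | neg ψ ih => exact ih
  | disj ψ₁ ψ₂ ih1 ih2 => exact ih1.mono (by simp [fvsQ, Finset.subset_union_left])
  | next ψ ih => exact ih
  | untl ψ₁ ψ₂ ih1 ih2 => exact ih1.mono (by simp [fvsQ, Finset.subset_union_left])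

def qsize : QF AP → ℕ
  | .atom _ _ => 1
  | .neg ψ => qsize ψ + 1
  | .disj ψ₁ ψ₂ => qsize ψ₁ + qsize ψ₂ + 1
  | .next ψ => qsize ψ + 1
  | .untl ψ₁ ψ₂ => qsize ψ₁ + qsize ψ₂ + 1

lemma one_le_qsize (ψ : QF AP) : 1 ≤ qsize ψ := by
  cases ψ <;> simp [qsize]

/-- satisfaction only depends on free variables -/
lemma sat_congr (ψ : QF AP) : ∀ (As As' : ℕ → Trace AP),
    (∀ x ∈ ψ.freeVars, As x = As' x) → (ψ.sat As ↔ ψ.sat As') := by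
  induction ψ with
  | atom a x => intro As As' h; simp [QF.sat, h x (by simp [QF.freeVars])]
  | neg ψ ih => intro As As' h; simp [QF.sat]; exact not_congr (ih As As' h)
  | disj ψ₁ ψ₂ ih1 ih2 =>
      intro As As' h
      simp only [QF.sat]
      exact or_congr (ih1 As As' fun x hx => h x (Or.inl hx)) (ih2 As As' fun x hx => h x (Or.inr hx))
  | next ψ ih =>
      intro As As' h
      simp only [QF.sat]
      exact ih _ _ fun x hx => by simp [shiftAsg, h x hx]
  | untl ψ₁ ψ₂ ih1 ih2 =>
      intro As As' h
      simp only [QF.sat]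
      constructor <;> rintro ⟨j, h2, h1⟩
      · exact ⟨j, (ih2 _ _ fun x hx => by simp [shiftAsg, h x (Or.inr hx)]).mp h2,
          fun j' hj' => (ih1 _ _ fun x hx => by simp [shiftAsg, h x (Or.inl hx)]).mp (h1 j' hj')⟩
      · exact ⟨j, (ih2 _ _ fun x hx => by simp [shiftAsg, h x (Or.inr hx)]).mpr h2,
          fun j' hj' => (ih1 _ _ fun x hx => by simp [shiftAsg, h x (Or.inl hx)]).mpr (h1 j' hj')⟩

lemma conj_sat (ψ₁ ψ₂ : QF AP) (As : ℕ → Trace AP) :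
    (QF.conj ψ₁ ψ₂).sat As ↔ ψ₁.sat As ∧ ψ₂.sat As := by
  simp [QF.conj, QF.sat]

lemma ev_sat (ψ : QF AP) (As : ℕ → Trace AP) :
    (QF.ev ψ).sat As ↔ ∃ j, ψ.sat (shiftAsg As j) := by
  simp only [QF.ev, QF.sat]
  constructor
  · rintro ⟨j, h, -⟩; exact ⟨j, h⟩
  · rintro ⟨j, h⟩; exact ⟨j, h, fun j' _ => Classical.em _⟩

lemma freeVars_conj (ψ₁ ψ₂ : QF AP) :
    (QF.conj ψ₁ ψ₂).freeVars = ψ₁.freeVars ∪ ψ₂.freeVars := by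
  simp [QF.conj, QF.freeVars]

lemma freeVars_ev (ψ : QF AP) : (QF.ev ψ).freeVars = ψ.freeVars := by
  simp [QF.ev, QF.freeVars]

lemma freeVars_leHat (x y : ℕ) : (leHat x y : QF (Option AP)).freeVars = {x, y} := by
  simp [leHat, freeVars_ev, freeVars_conj, QF.freeVars]
  ext z; simp [Set.mem_insert_iff]; tauto

/-- the `mtr` trace: letters at absolute position 0, the marker `o` at absolute
position `v`, shifted by `c`. -/
def mtr (ℓ : Set AP) (v c : ℕ) : Trace (Option AP) :=
  fun i => {z | (∃ a : AP, z = some a ∧ i + c = 0 ∧ a ∈ ℓ) ∨ (z = none ∧ i + c = v)}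

lemma mem_mtr_some (ℓ : Set AP) (v c i : ℕ) (a : AP) :
    some a ∈ mtr ℓ v c i ↔ (i + c = 0 ∧ a ∈ ℓ) := by
  simp [mtr]

lemma mem_mtr_none (ℓ : Set AP) (v c i : ℕ) :
    (none : Option AP) ∈ mtr ℓ v c i ↔ i + c = v := by
  simp [mtr]

lemma mtr_shift (ℓ : Set AP) (v c j : ℕ) :
    Trace.shift (mtr ℓ v c) j = mtr ℓ v (c + j) := by
  funext i; ext z
  simp only [Trace.shift, mtr, Set.mem_setOf_eq]
  constructor
  · rintro (⟨a, rfl, h1, h2⟩ | ⟨rfl, h⟩)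
    · exact Or.inl ⟨a, rfl, by omega, h2⟩
    · exact Or.inr ⟨rfl, by omega⟩
  · rintro (⟨a, rfl, h1, h2⟩ | ⟨rfl, h⟩)
    · exact Or.inl ⟨a, rfl, by omega, h2⟩
    · exact Or.inr ⟨rfl, by omega⟩

lemma shiftAsg_mtr (ℓ : ℕ → Set AP) (u : ℕ → ℕ) (c j : ℕ) :
    shiftAsg (fun x => mtr (ℓ x) (u x) c) j = fun x => mtr (ℓ x) (u x) (c + j) := by
  funext x; exact mtr_shift _ _ _ _

lemma encTrace_eq_mtr (w : FinWord AP) (g : ℕ → ℕ) (n : ℕ) :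
    encTrace w g n = mtr (w.letter n) (g n) 0 := by
  funext i; ext z; simp [encTrace, mtr]



/-- spacing data for two tuples of marker positions -/
def Gd (S : Finset ℕ) (K : ℕ) (u u' : ℕ → ℕ) : Prop :=
  ∀ x ∈ S, (K ≤ u x ∧ K ≤ u' x) ∧ ∀ y ∈ S,
    (u x = u y ∧ u' x = u' y) ∨ (u x + K ≤ u y ∧ u' x + K ≤ u' y) ∨
      (u y + K ≤ u x ∧ u' y + K ≤ u' x)

lemma Gd.symm {S K u u'} (h : Gd S K u u') : Gd S K u' u := by
  intro x hx
  obtain ⟨⟨h1, h2⟩, h3⟩ := h x hx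
  refine ⟨⟨h2, h1⟩, fun y hy => ?_⟩
  rcases h3 y hy with ⟨a, b⟩ | ⟨a, b⟩ | ⟨a, b⟩
  · exact Or.inl ⟨b, a⟩
  · exact Or.inr (Or.inl ⟨b, a⟩)
  · exact Or.inr (Or.inr ⟨b, a⟩)

/-- synchronisation of two shift offsets `c`, `c'` -/
def Syn (S : Finset ℕ) (u u' : ℕ → ℕ) (M c c' : ℕ) : Prop :=
  (c = 0 ↔ c' = 0) ∧ ∀ x ∈ S,
    (u x < c ↔ u' x < c') ∧
    (((c ≤ u x ∧ u x < c + M) ∨ (c' ≤ u' x ∧ u' x < c' + M)) → u x + c' = u' x + c)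

lemma Syn.symm {S u u' M c c'} (h : Syn S u u' M c c') : Syn S u' u M c' c := by
  refine ⟨h.1.symm, fun x hx => ?_⟩
  obtain ⟨h1, h2⟩ := h.2 x hx
  exact ⟨h1.symm, fun hp => by omega⟩

lemma Syn.mono {S u u' M M' c c'} (hMM : M' ≤ M) (h : Syn S u u' M c c') :
    Syn S u u' M' c c' := by
  refine ⟨h.1, fun x hx => ?_⟩
  obtain ⟨h1, h2⟩ := h.2 x hx
  exact ⟨h1, fun hp => by omega⟩

lemma Syn.succ {S u u' M c c'} (hM : 1 ≤ M) (h : Syn S u u' M c c') :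
    Syn S u u' (M - 1) (c + 1) (c' + 1) := by
  refine ⟨by omega, fun x hx => ?_⟩
  obtain ⟨h1, h2⟩ := h.2 x hx
  constructor
  · omega
  · omega

lemma window_step {S K u u' M c c'} (hG : Gd S K u u') (hK : M + 2 ≤ K) (hM : 1 ≤ M)
    (hs : Syn S u u' M c c') {d : ℕ} (hd : c ≤ d) {x : ℕ} (hx : x ∈ S)
    (h1 : d ≤ u x) (h2 : u x < d + M) :
    ∃ d', c' ≤ d' ∧ d' + u x = u' x + d ∧ Syn S u u' (M - 1) d d' := by
  obtain ⟨⟨hvx, hvx'⟩, htri⟩ := hG x hx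
  obtain ⟨hfl, hco⟩ := hs
  obtain ⟨hX1, hX2⟩ := hco x hx
  refine ⟨u' x - (u x - d), by omega, by omega, ⟨by omega, fun y hy => ?_⟩⟩
  obtain ⟨⟨hvy, hvy'⟩, _⟩ := hG y hy
  obtain ⟨hY1, hY2⟩ := hco y hy
  rcases htri y hy with ⟨a, b⟩ | ⟨a, b⟩ | ⟨a, b⟩ <;>
    exact ⟨by omega, fun hp => by omega⟩

lemma gapA_step {S K u u' M c c'} (hG : Gd S K u u') (hK : M + 2 ≤ K) (hM : 1 ≤ M)
    (hs : Syn S u u' M c c') {d : ℕ} (hd : c ≤ d)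
    (hgap : ∀ y ∈ S, u y < d ∨ d + M ≤ u y) {x₀ : ℕ} (hx₀ : x₀ ∈ S)
    (hc₀ : c ≤ u x₀) (hlt₀ : u x₀ < d)
    (hmax : ∀ y ∈ S, y ∈ S → u y < d → u y ≤ u x₀) :
    c' ≤ u' x₀ + 1 ∧ Syn S u u' (M - 1) d (u' x₀ + 1) := by
  obtain ⟨⟨hvx, hvx'⟩, htri⟩ := hG x₀ hx₀
  obtain ⟨hfl, hco⟩ := hs
  obtain ⟨hX1, hX2⟩ := hco x₀ hx₀
  refine ⟨by omega, ⟨by omega, fun y hy => ?_⟩⟩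
  obtain ⟨⟨hvy, hvy'⟩, _⟩ := hG y hy
  obtain ⟨hY1, hY2⟩ := hco y hy
  have hgy := hgap y hy
  have hmy := hmax y hy hy
  rcases htri y hy with ⟨a, b⟩ | ⟨a, b⟩ | ⟨a, b⟩ <;>
    exact ⟨by omega, fun hp => by omega⟩

lemma gapB_step {S K u u' M c c'} (hG : Gd S K u u') (hK : M + 2 ≤ K) (hM : 1 ≤ M)
    (hs : Syn S u u' M c c') {d : ℕ}
    (hgap : ∀ y ∈ S, u y < d ∨ d + M ≤ u y)
    (hall : ∀ y ∈ S, u y < d → u y < c) (hcd : c < d) :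
    c' ≤ max c' 1 ∧ Syn S u u' (M - 1) d (max c' 1) := by
  obtain ⟨hfl, hco⟩ := hs
  refine ⟨by omega, ⟨by omega, fun y hy => ?_⟩⟩
  obtain ⟨⟨hvy, hvy'⟩, _⟩ := hG y hy
  obtain ⟨hY1, hY2⟩ := hco y hy
  have hgy := hgap y hy
  have hay := hall y hy
  exact ⟨by omega, fun hp => by omega⟩


lemma match_step {S K u u' M c c'} (hG : Gd S K u u') (hK : M + 2 ≤ K) (hM : 1 ≤ M)
    (hs : Syn S u u' M c c') (d : ℕ) (hd : c ≤ d) :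
    ∃ d', c' ≤ d' ∧ Syn S u u' (M - 1) d d' ∧
      ∀ e', c' ≤ e' → e' < d' → ∃ e, c ≤ e ∧ e < d ∧ Syn S u u' (M - 1) e e' := by
  rcases eq_or_lt_of_le hd with rfl | hcd
  · exact ⟨c', le_refl _, hs.mono (by omega), fun e' h1 h2 => absurd h1 (by omega)⟩
  -- the generic treatment of a back-matching target e' in one of the two gap cases,
  -- assuming we know d' ≥ c' and Syn (M-1) d d' :
  have back : ∀ d', c' ≤ d' → Syn S u u' (M - 1) d d' →
      (∀ e', c' < e' → e' < d' →
        ((∃ y ∈ S, e' ≤ u' y ∧ u' y < e' + M) → ∃ e, c ≤ e ∧ e < d ∧ Syn S u u' (M-1) e e') ∧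
        ((∀ y ∈ S, u' y < e' ∨ e' + M ≤ u' y) →
          (∃ y ∈ S, u' y < e' ∧ c' ≤ u' y) → ∃ e₀ ∈ S, u e₀ < d ∧ u' e₀ < e' ∧
            (∀ y ∈ S, u' y < e' → u' y ≤ u' e₀) ∧ c ≤ u e₀ ∧
            Syn S u u' (M-1) (u e₀ + 1) e') ∧
        ((∀ y ∈ S, u' y < e' ∨ e' + M ≤ u' y) →
          (∀ y ∈ S, u' y < e' → u' y < c') → Syn S u u' (M-1) (max c 1) e')) := by
    intro d' hc'd' hSdd' e' hce' he'd'
    refine ⟨?_, ?_, ?_⟩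
    · rintro ⟨y, hy, g1, g2⟩
      obtain ⟨e, hce, heeq, hS'⟩ :=
        window_step hG.symm hK hM hs.symm (le_of_lt hce') hy g1 g2
      exact ⟨e, hce, by {
        obtain ⟨hfl, hco⟩ := hSdd'
        obtain ⟨hY1, hY2⟩ := hco y hy
        omega }, hS'.symm⟩
    · intro hgap' hPa'
      obtain ⟨y₁, hy₁, hy₁lt, hy₁ge⟩ := hPa'
      have hne : (S.filter (fun y => u' y < e')).Nonempty := ⟨y₁, by simp [hy₁, hy₁lt]⟩
      obtain ⟨y₀, hy₀mem, hy₀max⟩ := Finset.exists_max_image _ u' hne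
      simp only [Finset.mem_filter] at hy₀mem
      obtain ⟨hy₀, hy₀lt⟩ := hy₀mem
      have hmax : ∀ y ∈ S, u' y < e' → u' y ≤ u' y₀ := fun y hy h =>
        hy₀max y (by simp [hy, h])
      have hc₀ : c' ≤ u' y₀ := le_trans hy₁ge (hmax y₁ hy₁ hy₁lt)
      obtain ⟨hcle, hS'⟩ := gapA_step hG.symm hK hM hs.symm (le_of_lt hce') hgap' hy₀
        hc₀ hy₀lt (fun y hy _ h => hmax y hy h)
      have hcy : c ≤ u y₀ := by
        obtain ⟨hfl, hco⟩ := hs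
        obtain ⟨hY1, hY2⟩ := hco y₀ hy₀
        omega
      have hyd : u y₀ < d := by
        obtain ⟨hfl, hco⟩ := hSdd'
        obtain ⟨hY1, hY2⟩ := hco y₀ hy₀
        omega
      exact ⟨y₀, hy₀, hyd, hy₀lt, hmax, hcy, hS'.symm⟩
    · intro hgap' hall'
      obtain ⟨hcle, hS'⟩ := gapB_step hG.symm hK hM hs.symm hgap' hall' hce'
      exact hS'.symm
  by_cases hwin : ∃ x ∈ S, d ≤ u x ∧ u x < d + M
  · obtain ⟨x, hx, h1, h2⟩ := hwin
    obtain ⟨d', hc'd', hd'eq, hSdd'⟩ := window_step hG hK hM hs (le_of_lt hcd) hx h1 h2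
    obtain ⟨⟨hvx, hvx'⟩, htri⟩ := hG x hx
    refine ⟨d', hc'd', hSdd', ?_⟩
    intro e' he1 he2
    rcases eq_or_lt_of_le he1 with rfl | hce'
    · exact ⟨c, le_refl _, hcd, hs.mono (by omega)⟩
    obtain ⟨bw, bga, bgb⟩ := back d' hc'd' hSdd' e' hce' he2
    by_cases hwin' : ∃ y ∈ S, e' ≤ u' y ∧ u' y < e' + M
    · exact bw hwin'
    push_neg at hwin'
    have hgap' : ∀ y ∈ S, u' y < e' ∨ e' + M ≤ u' y := by
      intro y hy; have := hwin' y hy; omega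
    by_cases hPa : ∃ y ∈ S, u' y < e' ∧ c' ≤ u' y
    · obtain ⟨y₀, hy₀, hyd, h3, hmaxp, hcy, hS⟩ := bga hgap' hPa
      refine ⟨u y₀ + 1, by omega, ?_, hS⟩
      rcases htri y₀ hy₀ with ⟨a, b⟩ | ⟨a, b⟩ | ⟨a, b⟩ <;> omega
    · push_neg at hPa
      have hS := bgb hgap' hPa
      refine ⟨max c 1, by omega, ?_, hS⟩
      -- max c 1 < d
      omega
  · push_neg at hwin
    have hgap : ∀ y ∈ S, u y < d ∨ d + M ≤ u y := by
      intro y hy; have := hwin y hy; omega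
    by_cases hPa : ∃ y ∈ S, u y < d ∧ c ≤ u y
    · obtain ⟨y₁, hy₁, hy₁lt, hy₁ge⟩ := hPa
      have hne : (S.filter (fun y => u y < d)).Nonempty := ⟨y₁, by simp [hy₁, hy₁lt]⟩
      obtain ⟨x₀, hx₀mem, hx₀max⟩ := Finset.exists_max_image _ u hne
      simp only [Finset.mem_filter] at hx₀mem
      obtain ⟨hx₀, hx₀lt⟩ := hx₀mem
      have hmax : ∀ y ∈ S, u y < d → u y ≤ u x₀ := fun y hy h => hx₀max y (by simp [hy, h])
      have hc₀ : c ≤ u x₀ := le_trans hy₁ge (hmax y₁ hy₁ hy₁lt)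
      obtain ⟨hcle, hSdd'⟩ := gapA_step hG hK hM hs (le_of_lt hcd) hgap hx₀ hc₀ hx₀lt
        (fun y hy _ h => hmax y hy h)
      obtain ⟨⟨hvx₀, hvx₀'⟩, htri₀⟩ := hG x₀ hx₀
      refine ⟨u' x₀ + 1, hcle, hSdd', ?_⟩
      intro e' he1 he2
      rcases eq_or_lt_of_le he1 with rfl | hce'
      · exact ⟨c, le_refl _, hcd, hs.mono (by omega)⟩
      obtain ⟨bw, bga, bgb⟩ := back (u' x₀ + 1) hcle hSdd' e' hce' he2
      by_cases hwin' : ∃ y ∈ S, e' ≤ u' y ∧ u' y < e' + M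
      · exact bw hwin'
      push_neg at hwin'
      have hgap' : ∀ y ∈ S, u' y < e' ∨ e' + M ≤ u' y := by
        intro y hy; have := hwin' y hy; omega
      by_cases hPa' : ∃ y ∈ S, u' y < e' ∧ c' ≤ u' y
      · obtain ⟨y₀, hy₀, hyd, h3, hmaxp, hcy, hS⟩ := bga hgap' hPa'
        refine ⟨u y₀ + 1, by omega, ?_, hS⟩
        rcases htri₀ y₀ hy₀ with ⟨a, b⟩ | ⟨a, b⟩ | ⟨a, b⟩ <;> omega
      · push_neg at hPa'
        have hS := bgb hgap' hPa'
        refine ⟨max c 1, by omega, ?_, hS⟩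
        omega
    · push_neg at hPa
      have hall : ∀ y ∈ S, u y < d → u y < c := by
        intro y hy h
        have := hPa y hy
        omega
      obtain ⟨hcle, hSdd'⟩ := gapB_step hG hK hM hs hgap hall hcd
      refine ⟨max c' 1, hcle, hSdd', ?_⟩
      intro e' he1 he2
      have he'c : e' = c' ∧ c' = 0 := by omega
      obtain ⟨rfl, rfl⟩ := he'c
      exact ⟨c, le_refl _, hcd, hs.mono (by omega)⟩



lemma coreB (S : Finset ℕ) (K : ℕ) (u u' : ℕ → ℕ) (ℓ ℓ' : ℕ → Set AP)
    (hG : Gd S K u u') (hl : ∀ x ∈ S, ℓ x = ℓ' x) :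
    ∀ (ψ : QF (Option AP)) (M c c' : ℕ), fvsQ ψ ⊆ S → qsize ψ ≤ M → M + 2 ≤ K →
      Syn S u u' M c c' →
      (QF.sat ψ (fun x => mtr (ℓ x) (u x) c) ↔ QF.sat ψ (fun x => mtr (ℓ' x) (u' x) c')) := by
  intro ψ
  induction ψ with
  | atom a x =>
      intro M c c' hfv hsz hK hs
      have hxS : x ∈ S := hfv (by simp [fvsQ])
      obtain ⟨hN, hW⟩ := hs.2 x hxS
      have hfl := hs.1
      have hM : 1 ≤ M := by simpa [qsize] using hsz
      cases a with
      | none =>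
          simp only [QF.sat, mem_mtr_none]
          omega
      | some a =>
          simp only [QF.sat, mem_mtr_some, hl x hxS]
          constructor <;> rintro ⟨h1, h2⟩ <;> exact ⟨by omega, h2⟩
  | neg ψ ih =>
      intro M c c' hfv hsz hK hs
      simp only [QF.sat]
      exact not_congr (ih M c c' hfv (by simp [qsize] at hsz; omega) hK hs)
  | disj ψ₁ ψ₂ ih1 ih2 =>
      intro M c c' hfv hsz hK hs
      simp only [fvsQ, Finset.union_subset_iff] at hfv
      simp only [qsize] at hsz
      simp only [QF.sat]
      exact or_congr (ih1 M c c' hfv.1 (by omega) hK hs) (ih2 M c c' hfv.2 (by omega) hK hs)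
  | next ψ ih =>
      intro M c c' hfv hsz hK hs
      simp only [qsize] at hsz
      simp only [QF.sat, shiftAsg_mtr]
      exact ih (M - 1) (c + 1) (c' + 1) hfv (by omega) (by omega) (hs.succ (by omega))
  | untl ψ₁ ψ₂ ih1 ih2 =>
      intro M c c' hfv hsz hK hs
      simp only [fvsQ, Finset.union_subset_iff] at hfv
      simp only [qsize] at hsz
      have hq1 := one_le_qsize ψ₁
      have hq2 := one_le_qsize ψ₂
      simp only [QF.sat, shiftAsg_mtr]
      constructor
      · rintro ⟨j, h2, h1⟩
        obtain ⟨d', hc'd', hS, hback⟩ := match_step hG hK (by omega) hs (c + j) (by omega)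
        refine ⟨d' - c', ?_, ?_⟩
        · have he : c' + (d' - c') = d' := by omega
          simp only [he]
          exact (ih2 (M - 1) (c + j) d' hfv.2 (by omega) (by omega) hS).mp h2
        · intro j'' hj''
          obtain ⟨e, hce, hed, hSee⟩ := hback (c' + j'') (by omega) (by omega)
          have h1e := h1 (e - c) (by omega)
          have he : c + (e - c) = e := by omega
          simp only [he] at h1e
          exact (ih1 (M - 1) e (c' + j'') hfv.1 (by omega) (by omega) hSee).mp h1e
      · rintro ⟨j, h2, h1⟩
        obtain ⟨d, hcd, hS, hback⟩ := match_step hG.symm hK (by omega) hs.symm (c' + j) (by omega)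
        refine ⟨d - c, ?_, ?_⟩
        · have he : c + (d - c) = d := by omega
          simp only [he]
          exact (ih2 (M - 1) d (c' + j) hfv.2 (by omega) (by omega) hS.symm).mpr h2
        · intro j'' hj''
          obtain ⟨e', hce', hed', hSee'⟩ := hback (c + j'') (by omega) (by omega)
          have h1e := h1 (e' - c') (by omega)
          have he : c' + (e' - c') = e' := by omega
          simp only [he] at h1e
          exact (ih1 (M - 1) (c + j'') e' hfv.1 (by omega) (by omega) hSee'.symm).mpr h1e


lemma mem_encTrace_none (w : FinWord AP) (f : ℕ → ℕ) (n i : ℕ) :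
    (none : Option AP) ∈ encTrace w f n i ↔ i = f n := by simp [encTrace]

lemma mem_encTrace_some (w : FinWord AP) (f : ℕ → ℕ) (n i : ℕ) (a : AP) :
    some a ∈ encTrace w f n i ↔ (i = 0 ∧ a ∈ w.letter n) := by simp [encTrace]

lemma leHat_sat (w : FinWord AP) (f : ℕ → ℕ) (hf : IsStretch f)
    (As : ℕ → Trace (Option AP)) {x y mx my : ℕ}
    (hx : As x = encTrace w f mx) (hy : As y = encTrace w f my) :
    ((leHat x y).sat As ↔ mx ≤ my) := by
  simp only [leHat, ev_sat, conj_sat]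
  simp only [QF.sat, shiftAsg, Trace.shift, hx, hy, mem_encTrace_none]
  constructor
  · rintro ⟨j, h1, k, h2⟩
    exact (hf.1.le_iff_le).mp (by omega)
  · intro h
    exact ⟨f mx, by omega, f my - f mx, by have := (hf.1.le_iff_le).mpr h; omega⟩

def trueQ (x : ℕ) : QF (Option AP) := .disj (.atom none x) (.neg (.atom none x))

lemma trueQ_sat (x : ℕ) (As : ℕ → Trace (Option AP)) : (trueQ x).sat As := by
  simp only [trueQ, QF.sat]
  exact Classical.em _

lemma sat_foldr_conj (l : List (QF AP)) (b : QF AP) (As : ℕ → Trace AP) :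
    ((l.foldr QF.conj b).sat As) ↔ (∀ χ ∈ l, χ.sat As) ∧ b.sat As := by
  induction l with
  | nil => simp
  | cons χ l ih => simp [conj_sat, ih]; tauto

lemma sat_foldr_disj (l : List (QF AP)) (b : QF AP) (As : ℕ → Trace AP) :
    ((l.foldr QF.disj b).sat As) ↔ (∃ χ ∈ l, χ.sat As) ∨ b.sat As := by
  induction l with
  | nil => simp [QF.sat]
  | cons χ l ih =>
      simp only [List.foldr_cons, QF.sat, ih, List.mem_cons]
      constructor
      · rintro (h | ⟨χ', h1, h2⟩ | h)
        · exact Or.inl ⟨χ, Or.inl rfl, h⟩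
        · exact Or.inl ⟨χ', Or.inr h1, h2⟩
        · exact Or.inr h
      · rintro (⟨χ', (rfl | h1), h2⟩ | h)
        · exact Or.inl h2
        · exact Or.inr (Or.inl ⟨χ', h1, h2⟩)
        · exact Or.inr (Or.inr h)

lemma SimpleQF.conj' {ψ₁ ψ₂ : QF (Option AP)} (h1 : SimpleQF ψ₁) (h2 : SimpleQF ψ₂) :
    SimpleQF (QF.conj ψ₁ ψ₂) := .neg (.disj (.neg h1) (.neg h2))

lemma simple_trueQ (x : ℕ) : SimpleQF (trueQ (AP := AP) x) :=
  .disj (.atom _ _) (.neg (.atom _ _))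

lemma simple_foldr_conj {l : List (QF (Option AP))} {b : QF (Option AP)}
    (hl : ∀ χ ∈ l, SimpleQF χ) (hb : SimpleQF b) : SimpleQF (l.foldr QF.conj b) := by
  induction l with
  | nil => exact hb
  | cons χ l ih =>
      exact SimpleQF.conj' (hl χ (by simp)) (ih fun χ' h => hl χ' (by simp [h]))

lemma simple_foldr_disj {l : List (QF (Option AP))} {b : QF (Option AP)}
    (hl : ∀ χ ∈ l, SimpleQF χ) (hb : SimpleQF b) : SimpleQF (l.foldr QF.disj b) := by
  induction l with
  | nil => exact hb
  | cons χ l ih =>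
      exact .disj (hl χ (by simp)) (ih fun χ' h => hl χ' (by simp [h]))

lemma freeVars_trueQ (x : ℕ) : (trueQ (AP := AP) x).freeVars = {x} := by
  simp [trueQ, QF.freeVars]

lemma freeVars_foldr_conj_sub {l : List (QF AP)} {b : QF AP} {V : Set ℕ}
    (hl : ∀ χ ∈ l, χ.freeVars ⊆ V) (hb : b.freeVars ⊆ V) :
    (l.foldr QF.conj b).freeVars ⊆ V := by
  induction l with
  | nil => exact hb
  | cons χ l ih =>
      rw [List.foldr_cons, freeVars_conj]
      exact Set.union_subset (hl χ (by simp)) (ih fun χ' h => hl χ' (by simp [h]))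

lemma freeVars_foldr_disj_sub {l : List (QF AP)} {b : QF AP} {V : Set ℕ}
    (hl : ∀ χ ∈ l, χ.freeVars ⊆ V) (hb : b.freeVars ⊆ V) :
    (l.foldr QF.disj b).freeVars ⊆ V := by
  induction l with
  | nil => exact hb
  | cons χ l ih =>
      have : (QF.disj χ (l.foldr QF.disj b)).freeVars = χ.freeVars ∪ (l.foldr QF.disj b).freeVars := rfl
      rw [List.foldr_cons, this]
      exact Set.union_subset (hl χ (by simp)) (ih fun χ' h => hl χ' (by simp [h]))

lemma freeVars_foldr_conj_mem {l : List (QF AP)} {b : QF AP} {χ : QF AP}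
    (h : χ ∈ l) : χ.freeVars ⊆ (l.foldr QF.conj b).freeVars := by
  induction l with
  | nil => simp at h
  | cons χ' l ih =>
      rw [List.foldr_cons, freeVars_conj]
      rcases List.mem_cons.mp h with rfl | h'
      · exact Set.subset_union_left
      · exact (ih h').trans Set.subset_union_right


/-! ### the abstraction by types -/

def Spread (K : ℕ) (g : ℕ → ℕ) : Prop := (∀ n, K ≤ g n) ∧ ∀ m n, m < n → g m + K ≤ g n

section Ty

variable [Fintype AP]

abbrev Vt (ψ : QF (Option AP)) : Type := {x : ℕ // x ∈ fvsQ ψ}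

abbrev TY (AP : Type) [Fintype AP] (ψ : QF (Option AP)) : Type :=
  (Vt ψ → AP → Prop) × (Vt ψ → Vt ψ → Prop)

noncomputable instance (ψ : QF (Option AP)) : Fintype (TY AP ψ) := by
  classical
  infer_instance

def tyF (ψ : QF (Option AP)) (w : FinWord AP) (n : Vt ψ → ℕ) : TY AP ψ :=
  ⟨fun x a => a ∈ w.letter (n x), fun x y => n x ≤ n y⟩

noncomputable def asg (ψ : QF (Option AP)) (w : FinWord AP) (g : ℕ → ℕ)
    (n : Vt ψ → ℕ) : ℕ → Trace (Option AP) :=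
  fun x => if h : x ∈ fvsQ ψ then encTrace w g (n ⟨x, h⟩) else mtr ∅ 0 0

def Bp (ψ : QF (Option AP)) (τ : TY AP ψ) : Prop :=
  ∀ (w : FinWord AP) (g : ℕ → ℕ) (n : Vt ψ → ℕ), Spread (qsize ψ + 2) g →
    (∀ x, n x < w.len) → tyF ψ w n = τ → QF.sat ψ (asg ψ w g n)

def piv (ψ : QF (Option AP)) : ℕ := (fvsQ ψ).min' (fvsQ_nonempty ψ)

lemma piv_mem (ψ : QF (Option AP)) : piv ψ ∈ fvsQ ψ := Finset.min'_mem _ _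

open Classical in
noncomputable def descQ (ψ : QF (Option AP)) (τ : TY AP ψ) : QF (Option AP) :=
  ((((Finset.univ : Finset (Vt ψ × AP)).toList.map fun (p : Vt ψ × AP) =>
      if τ.1 p.1 p.2 then QF.atom (some p.2) p.1.1 else .neg (.atom (some p.2) p.1.1)) ++
    ((Finset.univ : Finset (Vt ψ × Vt ψ)).toList.map fun (p : Vt ψ × Vt ψ) =>
      if τ.2 p.1 p.2 then leHat p.1.1 p.2.1 else .neg (leHat p.1.1 p.2.1)))).foldr
    QF.conj (trueQ (piv ψ))

noncomputable def allV (ψ : QF (Option AP)) : QF (Option AP) :=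
  (((Finset.univ : Finset (Vt ψ)).toList.map fun (x : Vt ψ) => leHat x.1 x.1)).foldr
    QF.conj (trueQ (piv ψ))

open Classical in
noncomputable def tildeQ (ψ : QF (Option AP)) : QF (Option AP) :=
  QF.conj (allV ψ)
    ((((Finset.univ : Finset (TY AP ψ)).filter (Bp ψ)).toList.map (descQ ψ)).foldr
      QF.disj (.neg (trueQ (piv ψ))))

variable {ψ : QF (Option AP)} {w : FinWord AP} {g : ℕ → ℕ} {n : Vt ψ → ℕ}
  {As : ℕ → Trace (Option AP)}

lemma desc_sat (hg : IsStretch g) (hAs : ∀ x : Vt ψ, As x.1 = encTrace w g (n x))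
    (τ : TY AP ψ) : (descQ ψ τ).sat As ↔ tyF ψ w n = τ := by
  classical
  have hty : tyF ψ w n = τ ↔
      ((∀ (x : Vt ψ) (a : AP), τ.1 x a ↔ a ∈ w.letter (n x)) ∧
       (∀ x y : Vt ψ, τ.2 x y ↔ n x ≤ n y)) := by
    constructor
    · rintro rfl
      exact ⟨fun x a => Iff.rfl, fun x y => Iff.rfl⟩
    · rintro ⟨h1, h2⟩
      refine Prod.ext ?_ ?_
      · funext x a
        exact propext (h1 x a).symm
      · funext x y
        exact propext (h2 x y).symm
  rw [hty, descQ, sat_foldr_conj]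
  have htr : (trueQ (AP := AP) (piv ψ)).sat As := trueQ_sat _ _
  simp only [htr, and_true, List.forall_mem_append, List.forall_mem_map,
    Finset.mem_toList, Finset.mem_univ, forall_true_left]
  constructor
  · rintro ⟨h1, h2⟩
    constructor
    · intro x a
      have := h1 (x, a)
      by_cases hτ : τ.1 x a
      · simp only [hτ, if_pos] at this
        simp only [QF.sat, hAs x, mem_encTrace_some] at this
        exact ⟨fun _ => this.2, fun _ => hτ⟩
      · simp only [hτ, if_neg, not_false_iff] at this
        simp only [QF.sat, hAs x, mem_encTrace_some] at this
        constructor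
        · intro h; exact absurd h hτ
        · intro h; exact absurd ⟨by trivial, h⟩ this
    · intro x y
      have := h2 (x, y)
      have hle := leHat_sat w g hg As (hAs x) (hAs y)
      by_cases hτ : τ.2 x y
      · simp only [hτ, if_pos] at this
        exact ⟨fun _ => hle.mp this, fun _ => hτ⟩
      · simp only [hτ, if_neg, not_false_iff] at this
        simp only [QF.sat] at this
        constructor
        · intro h; exact absurd h hτ
        · intro h; exact absurd (hle.mpr h) this
  · rintro ⟨h1, h2⟩
    constructor
    · intro p
      by_cases hτ : τ.1 p.1 p.2
      · simp only [hτ, if_pos]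
        simp only [QF.sat, hAs p.1, mem_encTrace_some]
        exact ⟨by trivial, (h1 p.1 p.2).mp hτ⟩
      · simp only [hτ, if_neg, not_false_iff]
        simp only [QF.sat, hAs p.1, mem_encTrace_some]
        rintro ⟨-, h⟩
        exact hτ ((h1 p.1 p.2).mpr h)
    · intro p
      have hle := leHat_sat w g hg As (hAs p.1) (hAs p.2)
      by_cases hτ : τ.2 p.1 p.2
      · simp only [hτ, if_pos]
        exact hle.mpr ((h2 p.1 p.2).mp hτ)
      · simp only [hτ, if_neg, not_false_iff]
        simp only [QF.sat]
        intro h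
        exact hτ ((h2 p.1 p.2).mpr (hle.mp h))

lemma allV_sat (hg : IsStretch g) (hAs : ∀ x : Vt ψ, As x.1 = encTrace w g (n x)) :
    (allV ψ).sat As := by
  rw [allV, sat_foldr_conj]
  refine ⟨?_, trueQ_sat _ _⟩
  simp only [List.forall_mem_map, Finset.mem_toList, Finset.mem_univ, forall_true_left]
  intro x
  exact (leHat_sat w g hg As (hAs x) (hAs x)).mpr le_rfl

lemma tildeQ_sat (hg : IsStretch g) (hAs : ∀ x : Vt ψ, As x.1 = encTrace w g (n x)) :
    (tildeQ ψ).sat As ↔ Bp ψ (tyF ψ w n) := by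
  classical
  rw [tildeQ, conj_sat, sat_foldr_disj]
  have htr : ¬ (QF.neg (trueQ (AP := AP) (piv ψ))).sat As := by
    simp only [QF.sat, not_not]
    exact trueQ_sat _ _
  simp only [htr, or_false]
  constructor
  · rintro ⟨-, χ, hχ, hsat⟩
    obtain ⟨τ, hτ, rfl⟩ := List.mem_map.mp hχ
    rw [desc_sat hg hAs τ] at hsat
    rw [hsat]
    exact (Finset.mem_filter.mp (Finset.mem_toList.mp hτ)).2
  · intro hB
    refine ⟨allV_sat hg hAs, descQ ψ (tyF ψ w n), ?_, (desc_sat hg hAs _).mpr rfl⟩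
    exact List.mem_map.mpr ⟨tyF ψ w n, Finset.mem_toList.mpr
      (Finset.mem_filter.mpr ⟨Finset.mem_univ _, hB⟩), rfl⟩

lemma simple_tildeQ : SimpleQF (tildeQ ψ) := by
  classical
  refine SimpleQF.conj' ?_ ?_
  · refine simple_foldr_conj ?_ (simple_trueQ _)
    intro χ hχ
    obtain ⟨x, -, rfl⟩ := List.mem_map.mp hχ
    exact .le _ _
  · refine simple_foldr_disj ?_ (.neg (simple_trueQ _))
    intro χ hχ
    obtain ⟨τ, -, rfl⟩ := List.mem_map.mp hχ
    refine simple_foldr_conj ?_ (simple_trueQ _)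
    intro χ' hχ'
    rcases List.mem_append.mp hχ' with h | h
    · obtain ⟨p, -, rfl⟩ := List.mem_map.mp h
      split <;> first | exact .atom _ _ | exact .neg (.atom _ _)
    · obtain ⟨p, -, rfl⟩ := List.mem_map.mp h
      split <;> first | exact .le _ _ | exact .neg (.le _ _)

lemma freeVars_tildeQ_sub : (tildeQ ψ).freeVars ⊆ ↑(fvsQ ψ) := by
  classical
  rw [tildeQ, freeVars_conj]
  have hbase : (trueQ (AP := AP) (piv ψ)).freeVars ⊆ ↑(fvsQ ψ) := by
    rw [freeVars_trueQ]
    simp [piv_mem ψ]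
  refine Set.union_subset ?_ ?_
  · refine freeVars_foldr_conj_sub ?_ hbase
    intro χ hχ
    obtain ⟨x, -, rfl⟩ := List.mem_map.mp hχ
    rw [freeVars_leHat]
    intro z hz
    simp only [Set.mem_insert_iff, Set.mem_singleton_iff] at hz
    rcases hz with rfl | rfl <;> simpa using x.2
  · refine freeVars_foldr_disj_sub ?_ ?_
    · intro χ hχ
      obtain ⟨τ, -, rfl⟩ := List.mem_map.mp hχ
      refine freeVars_foldr_conj_sub ?_ hbase
      intro χ' hχ'
      rcases List.mem_append.mp hχ' with h | h
      · obtain ⟨p, -, rfl⟩ := List.mem_map.mp h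
        split
        · intro z hz
          simp only [QF.freeVars, Set.mem_singleton_iff] at hz
          subst hz; simpa using p.1.2
        · intro z hz
          simp only [QF.freeVars, Set.mem_singleton_iff] at hz
          subst hz; simpa using p.1.2
      · obtain ⟨p, -, rfl⟩ := List.mem_map.mp h
        have hsub : (leHat (AP := AP) p.1.1 p.2.1).freeVars ⊆ ↑(fvsQ ψ) := by
          rw [freeVars_leHat]
          intro z hz
          simp only [Set.mem_insert_iff, Set.mem_singleton_iff] at hz
          rcases hz with rfl | rfl
          · simpa using p.1.2
          · simpa using p.2.2
        split
        · exact hsub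
        · exact hsub
    · exact hbase

lemma freeVars_tildeQ_sup : (fvsQ ψ : Set ℕ) ⊆ (tildeQ ψ).freeVars := by
  classical
  intro z hz
  simp only [Finset.coe_sort_coe, Finset.mem_coe] at hz
  rw [tildeQ, freeVars_conj]
  apply Set.mem_union_left
  have hmem : leHat (AP := AP) z z ∈
      ((Finset.univ : Finset (Vt ψ)).toList.map fun (x : Vt ψ) => leHat x.1 x.1) :=
    List.mem_map.mpr ⟨⟨z, hz⟩, Finset.mem_toList.mpr (Finset.mem_univ _), rfl⟩
  apply freeVars_foldr_conj_mem hmem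
  rw [freeVars_leHat]
  simp

end Ty


section Leaf

variable [Fintype AP]

lemma leaf_main (ψ : QF (Option AP)) (w : FinWord AP) (g : ℕ → ℕ) (hg : IsStretch g)
    (hsp : Spread (qsize ψ + 2) g) (As : ℕ → Trace (Option AP))
    (h : ∀ x ∈ fvsQ ψ, ∃ m, m < w.len ∧ As x = encTrace w g m) :
    (ψ.sat As ↔ (tildeQ ψ).sat As) := by
  classical
  set n : Vt ψ → ℕ := fun x => (h x.1 x.2).choose with hn
  have hn1 : ∀ x : Vt ψ, n x < w.len := fun x => (h x.1 x.2).choose_spec.1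
  have hn2 : ∀ x : Vt ψ, As x.1 = encTrace w g (n x) := fun x => (h x.1 x.2).choose_spec.2
  have step3 : ((tildeQ ψ).sat As ↔ Bp ψ (tyF ψ w n)) := tildeQ_sat hg hn2
  have step1 : (ψ.sat As ↔ ψ.sat (asg ψ w g n)) := by
    apply sat_congr
    intro x hx
    have hx' : x ∈ fvsQ ψ := (mem_fvsQ ψ x).mpr hx
    rw [asg, dif_pos hx']
    exact hn2 ⟨x, hx'⟩
  have step2 : (ψ.sat (asg ψ w g n) ↔ Bp ψ (tyF ψ w n)) := by
    constructor
    · intro hsat w₂ g₂ n₂ hsp₂ hlen₂ hty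
      -- transfer via coreB
      set K := qsize ψ + 2 with hK
      set u : ℕ → ℕ := fun x => if hx : x ∈ fvsQ ψ then g (n ⟨x, hx⟩) else 0 with hu
      set u' : ℕ → ℕ := fun x => if hx : x ∈ fvsQ ψ then g₂ (n₂ ⟨x, hx⟩) else 0 with hu'
      set ℓ : ℕ → Set AP := fun x => if hx : x ∈ fvsQ ψ then w.letter (n ⟨x, hx⟩) else ∅ with hℓ
      set ℓ' : ℕ → Set AP := fun x => if hx : x ∈ fvsQ ψ then w₂.letter (n₂ ⟨x, hx⟩) else ∅ with hℓ'
      have hO : ∀ x y : Vt ψ, (n₂ x ≤ n₂ y ↔ n x ≤ n y) := by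
        intro x y
        exact iff_of_eq (congrFun (congrFun (congrArg Prod.snd hty) x) y)
      have hL : ∀ (x : Vt ψ) (a : AP), (a ∈ w₂.letter (n₂ x) ↔ a ∈ w.letter (n x)) := by
        intro x a
        exact iff_of_eq (congrFun (congrFun (congrArg Prod.fst hty) x) a)
      have hasg1 : asg ψ w g n = fun x => mtr (ℓ x) (u x) 0 := by
        funext x
        by_cases hx : x ∈ fvsQ ψ
        · rw [asg, dif_pos hx, hu, hℓ]
          simp only [dif_pos hx]
          exact encTrace_eq_mtr w g (n ⟨x, hx⟩)
        · rw [asg, dif_neg hx, hu, hℓ]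
          simp only [dif_neg hx]
      have hasg2 : asg ψ w₂ g₂ n₂ = fun x => mtr (ℓ' x) (u' x) 0 := by
        funext x
        by_cases hx : x ∈ fvsQ ψ
        · rw [asg, dif_pos hx, hu', hℓ']
          simp only [dif_pos hx]
          exact encTrace_eq_mtr w₂ g₂ (n₂ ⟨x, hx⟩)
        · rw [asg, dif_neg hx, hu', hℓ']
          simp only [dif_neg hx]
      have hG : Gd (fvsQ ψ) K u u' := by
        intro x hx
        constructor
        · constructor
          · simp only [hu, dif_pos hx]
            exact hsp.1 _
          · simp only [hu', dif_pos hx]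
            exact hsp₂.1 _
        · intro y hy
          simp only [hu, hu', dif_pos hx, dif_pos hy]
          have hxy := hO ⟨x, hx⟩ ⟨y, hy⟩
          have hyx := hO ⟨y, hy⟩ ⟨x, hx⟩
          rcases lt_trichotomy (n ⟨x, hx⟩) (n ⟨y, hy⟩) with hlt | heq | hgt
          · exact Or.inr (Or.inl ⟨hsp.2 _ _ hlt, hsp₂.2 _ _ (by omega)⟩)
          · have e2 : n₂ ⟨x, hx⟩ = n₂ ⟨y, hy⟩ := by omega
            exact Or.inl ⟨by rw [heq], by rw [e2]⟩
          · exact Or.inr (Or.inr ⟨hsp.2 _ _ hgt, hsp₂.2 _ _ (by omega)⟩)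
      have hl : ∀ x ∈ fvsQ ψ, ℓ x = ℓ' x := by
        intro x hx
        simp only [hℓ, hℓ', dif_pos hx]
        ext a
        exact (hL ⟨x, hx⟩ a).symm
      have hSyn : Syn (fvsQ ψ) u u' (qsize ψ) 0 0 := by
        refine ⟨Iff.rfl, fun x hx => ?_⟩
        have h1 : K ≤ u x := by simp only [hu, dif_pos hx]; exact hsp.1 _
        have h2 : K ≤ u' x := by simp only [hu', dif_pos hx]; exact hsp₂.1 _
        constructor
        · omega
        · intro hp
          omega
      have := coreB (fvsQ ψ) K u u' ℓ ℓ' hG hl ψ (qsize ψ) 0 0 (le_refl _) (le_refl _)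
        (le_refl _) hSyn
      rw [hasg2]
      rw [hasg1] at hsat
      exact this.mp hsat
    · intro hB
      exact hB w g n hsp hn1 rfl
  rw [step1, step2, step3]

lemma leaf_transfer (ψ : QF (Option AP)) (w : FinWord AP) (f g : ℕ → ℕ)
    (hf : IsStretch f) (hg : IsStretch g) (As As' : ℕ → Trace (Option AP))
    (h : ∀ x ∈ fvsQ ψ, ∃ m, m < w.len ∧ As x = encTrace w g m ∧ As' x = encTrace w f m) :
    ((tildeQ ψ).sat As ↔ (tildeQ ψ).sat As') := by
  classical
  set n : Vt ψ → ℕ := fun x => (h x.1 x.2).choose with hn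
  have hn2 : ∀ x : Vt ψ, As x.1 = encTrace w g (n x) := fun x => (h x.1 x.2).choose_spec.2.1
  have hn3 : ∀ x : Vt ψ, As' x.1 = encTrace w f (n x) := fun x => (h x.1 x.2).choose_spec.2.2
  rw [tildeQ_sat hg hn2, tildeQ_sat hf hn3]

end Leaf


/-! ### prefix machinery -/

def qfBody : HFormula AP₀ → QF AP₀
  | .ex _ φ => qfBody φ
  | .all _ φ => qfBody φ
  | .qf ψ => ψ

def rb : HFormula AP₀ → QF AP₀ → HFormula AP₀
  | .ex x φ, χ => .ex x (rb φ χ)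
  | .all x φ, χ => .all x (rb φ χ)
  | .qf _, χ => .qf χ

lemma samePrefix_rb (φ : HFormula AP₀) (χ : QF AP₀) : SamePrefix φ (rb φ χ) := by
  induction φ with
  | ex x φ ih => exact ⟨rfl, ih⟩
  | all x φ ih => exact ⟨rfl, ih⟩
  | qf ψ => trivial

lemma simpleBody_rb (φ : HFormula (Option AP)) {χ : QF (Option AP)} (h : SimpleQF χ) :
    SimpleBody (rb φ χ) := by
  induction φ with
  | ex x φ ih => exact ih
  | all x φ ih => exact ih
  | qf ψ => exact h

lemma qfBody_rb (φ : HFormula AP₀) (χ : QF AP₀) : qfBody (rb φ χ) = χ := by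
  induction φ with
  | ex x φ ih => exact ih
  | all x φ ih => exact ih
  | qf ψ => rfl

lemma rb_rb (φ : HFormula AP₀) (χ χ' : QF AP₀) : rb (rb φ χ) χ' = rb φ χ' := by
  induction φ with
  | ex x φ ih => simp [rb, ih]
  | all x φ ih => simp [rb, ih]
  | qf ψ => rfl

lemma freeVars_rb (φ : HFormula AP₀) (χ : QF AP₀)
    (h : χ.freeVars ⊆ (qfBody φ).freeVars) : (rb φ χ).freeVars ⊆ φ.freeVars := by
  induction φ with
  | ex x φ ih =>
      intro z hz
      obtain ⟨hz1, hz2⟩ := hz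
      exact ⟨ih h hz1, hz2⟩
  | all x φ ih =>
      intro z hz
      obtain ⟨hz1, hz2⟩ := hz
      exact ⟨ih h hz1, hz2⟩
  | qf ψ => exact h

lemma prefixT (w : FinWord AP₀') (f g : ℕ → ℕ) (χ : QF (Option AP₀')) :
    ∀ (φ' : HFormula (Option AP₀')) (As As' : ℕ → Trace (Option AP₀')),
    (∀ B B' : ℕ → Trace (Option AP₀'),
      (∀ x, (x ∈ (qfBody φ').freeVars ∨ x ∈ χ.freeVars) →
        ∃ m, m < w.len ∧ B x = encTrace w f m ∧ B' x = encTrace w g m) →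
      ((qfBody φ').sat B ↔ χ.sat B')) →
    (∀ x, (x ∈ φ'.freeVars ∨ x ∈ (rb φ' χ).freeVars) →
      ∃ m, m < w.len ∧ As x = encTrace w f m ∧ As' x = encTrace w g m) →
    (φ'.sat (encSet w f) As ↔ (rb φ' χ).sat (encSet w g) As') := by
  intro φ'
  induction φ' with
  | ex y φ₁ ih =>
      intro As As' hbody hinv
      constructor
      · rintro ⟨t, ⟨m, hm, rfl⟩, hsat⟩
        refine ⟨encTrace w g m, ⟨m, hm, rfl⟩, ?_⟩
        refine (ih (Function.update As y (encTrace w f m))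
          (Function.update As' y (encTrace w g m)) hbody ?_).mp hsat
        intro x hx
        by_cases hxy : x = y
        · subst hxy
          exact ⟨m, hm, by simp, by simp⟩
        · rw [Function.update_of_ne hxy, Function.update_of_ne hxy]
          apply hinv
          rcases hx with h | h
          · exact Or.inl ⟨h, hxy⟩
          · exact Or.inr ⟨h, hxy⟩
      · rintro ⟨t, ⟨m, hm, rfl⟩, hsat⟩
        refine ⟨encTrace w f m, ⟨m, hm, rfl⟩, ?_⟩
        refine (ih (Function.update As y (encTrace w f m))
          (Function.update As' y (encTrace w g m)) hbody ?_).mpr hsat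
        intro x hx
        by_cases hxy : x = y
        · subst hxy
          exact ⟨m, hm, by simp, by simp⟩
        · rw [Function.update_of_ne hxy, Function.update_of_ne hxy]
          apply hinv
          rcases hx with h | h
          · exact Or.inl ⟨h, hxy⟩
          · exact Or.inr ⟨h, hxy⟩
  | all y φ₁ ih =>
      intro As As' hbody hinv
      constructor
      · intro hall t ht
        obtain ⟨m, hm, rfl⟩ := ht
        refine (ih (Function.update As y (encTrace w f m))
          (Function.update As' y (encTrace w g m)) hbody ?_).mp
          (hall (encTrace w f m) ⟨m, hm, rfl⟩)
        intro x hx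
        by_cases hxy : x = y
        · subst hxy
          exact ⟨m, hm, by simp, by simp⟩
        · rw [Function.update_of_ne hxy, Function.update_of_ne hxy]
          apply hinv
          rcases hx with h | h
          · exact Or.inl ⟨h, hxy⟩
          · exact Or.inr ⟨h, hxy⟩
      · intro hall t ht
        obtain ⟨m, hm, rfl⟩ := ht
        refine (ih (Function.update As y (encTrace w f m))
          (Function.update As' y (encTrace w g m)) hbody ?_).mpr
          (hall (encTrace w g m) ⟨m, hm, rfl⟩)
        intro x hx
        by_cases hxy : x = y
        · subst hxy
          exact ⟨m, hm, by simp, by simp⟩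
        · rw [Function.update_of_ne hxy, Function.update_of_ne hxy]
          apply hinv
          rcases hx with h | h
          · exact Or.inl ⟨h, hxy⟩
          · exact Or.inr ⟨h, hxy⟩
  | qf ψ' =>
      intro As As' hbody hinv
      exact hbody As As' hinv


theorem main_result (AP : Type) [Fintype AP]
    (φ : HFormula (Option AP)) (hsent : φ.IsSentence) (hinv : StretchInvariant φ) :
    ∃ φt : HFormula (Option AP), SamePrefix φ φt ∧ SimpleBody φt ∧
      ∀ (w : FinWord AP) (f : ℕ → ℕ), IsStretch f →
        (HModels (encSet w f) φ ↔ HModels (encSet w f) φt) := by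
  classical
  set ψ : QF (Option AP) := qfBody φ with hψ
  set K : ℕ := qsize ψ + 2 with hKdef
  have hK3 : 3 ≤ K := by have := one_le_qsize ψ; omega
  have hcoe : (↑(fvsQ ψ) : Set ℕ) = ψ.freeVars := Set.ext (mem_fvsQ ψ)
  have hfvt_sub : (tildeQ ψ).freeVars ⊆ ψ.freeVars := by
    rw [← hcoe]; exact freeVars_tildeQ_sub
  have hfvφt : (rb φ (tildeQ ψ)).freeVars ⊆ φ.freeVars := freeVars_rb φ _ hfvt_sub
  have hempty : ∀ x : ℕ, ¬(x ∈ φ.freeVars ∨ x ∈ (rb φ (tildeQ ψ)).freeVars) := by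
    intro x hx
    rcases hx with h | h
    · rw [hsent] at h; exact h
    · have := hfvφt h; rw [hsent] at this; exact this
  refine ⟨rb φ (tildeQ ψ), samePrefix_rb φ _, simpleBody_rb φ simple_tildeQ, ?_⟩
  intro w f hf
  set g : ℕ → ℕ := fun m => K * (f m + 1) with hgdef
  have hg : IsStretch g := by
    constructor
    · intro a b hab
      have h1 := hf.1 hab
      exact mul_lt_mul_of_pos_left (by omega) (by omega)
    · have : K * 1 ≤ K * (f 0 + 1) := mul_le_mul_right (by omega) K
      simp only [hgdef]
      omega
  have hsp : Spread K g := by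
    constructor
    · intro m
      have : K * 1 ≤ K * (f m + 1) := mul_le_mul_right (by omega) K
      simp only [hgdef]; omega
    · intro m m' hmm'
      have h1 := hf.1 hmm'
      have h2 : K * (f m + 2) ≤ K * (f m' + 1) := mul_le_mul_right (by omega) K
      simp only [hgdef]
      calc K * (f m + 1) + K = K * (f m + 2) := by ring
        _ ≤ K * (f m' + 1) := h2
  have h1 : HModels (encSet w f) φ ↔ HModels (encSet w g) φ := hinv w f g hf hg
  have h2 : HModels (encSet w g) φ ↔ HModels (encSet w g) (rb φ (tildeQ ψ)) := by
    apply prefixT w g g (tildeQ ψ) φ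
    · intro B B' hcov
      have hBB' : ∀ x ∈ (qfBody φ).freeVars, B x = B' x := by
        intro x hx
        obtain ⟨m, hm, e1, e2⟩ := hcov x (Or.inl hx)
        rw [e1, e2]
      rw [sat_congr _ B B' hBB']
      apply leaf_main ψ w g hg (by rw [← hKdef]; exact hsp) B'
      intro x hx
      obtain ⟨m, hm, e1, e2⟩ := hcov x (Or.inl ((mem_fvsQ ψ x).mp hx))
      exact ⟨m, hm, e2⟩
    · intro x hx
      exact absurd hx (hempty x)
  have h3 : HModels (encSet w g) (rb φ (tildeQ ψ)) ↔
      HModels (encSet w f) (rb φ (tildeQ ψ)) := by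
    have := prefixT w g f (tildeQ ψ) (rb φ (tildeQ ψ))
      (fun _ _ => ∅) (fun _ _ => ∅) ?_ ?_
    · rwa [rb_rb] at this
    · intro B B' hcov
      rw [qfBody_rb]
      apply leaf_transfer ψ w f g hf hg B B'
      intro x hx
      have hx' : x ∈ (tildeQ ψ).freeVars := freeVars_tildeQ_sup (by simpa using hx)
      obtain ⟨m, hm, e1, e2⟩ := hcov x (Or.inr hx')
      exact ⟨m, hm, e1, e2⟩
    · intro x hx
      rcases hx with h | h
      · exact absurd (Or.inr h) (hempty x)
      · rw [rb_rb] at h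
        exact absurd (Or.inr h) (hempty x)
  exact (h1.trans h2).trans h3

end Stretchy

/-- **Simplification of stretch-invariant sentences**: every stretch-invariant
HyperLTL sentence is equivalent, over all word encodings, to a sentence with the
same quantifier prefix whose quantifier-free part is a Boolean combination of
formulas `a_π` and `F(o_π ∧ F o_π')`. -/
theorem stretch_invariant_simplification (AP : Type) [Fintype AP]
    (φ : HFormula (Option AP)) (hsent : φ.IsSentence) (hinv : StretchInvariant φ) :
    ∃ φt : HFormula (Option AP), SamePrefix φ φt ∧ SimpleBody φt ∧
      ∀ (w : FinWord AP) (f : ℕ → ℕ), IsStretch f →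
        (HModels (encSet w f) φ ↔ HModels (encSet w f) φt) :=
  Stretchy.main_result AP φ hsent hinv
end

section
/- Let Σ₁ and Σ₂ be disjoint finite alphabets and let L ⊆ Σ₁*·Σ₂^ω be a language of infinite words such that L = L(φ) for some LTL formula φ. Then there exists a finite family (φᵢ¹, φᵢ²)_{1≤i≤k} of LTL formulas such that L = ⋃_{1≤i≤k} L(φᵢ¹)·L(φᵢ²), where each L(φᵢ¹) ⊆ Σ₁* is a language of finite words and each L(φᵢ²) ⊆ Σ₂^ω is a language of infinite words. -/
/-! ### LTL over finite and infinite words, with letters as atoms -/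

inductive LTLv (σ : Type) : Type where
  | atom : σ → LTLv σ
  | neg  : LTLv σ → LTLv σ
  | disj : LTLv σ → LTLv σ → LTLv σ
  | next : LTLv σ → LTLv σ
  | untl : LTLv σ → LTLv σ → LTLv σ

/-- Semantics over infinite words: the atom `c` holds iff the first letter is `c`. -/
def LTLv.satInf {σ : Type} : LTLv σ → (ℕ → σ) → Prop
  | .atom c, w => w 0 = c
  | .neg φ, w => ¬ φ.satInf w
  | .disj φ ψ, w => φ.satInf w ∨ ψ.satInf w
  | .next φ, w => φ.satInf (fun i => w (i + 1))
  | .untl φ ψ, w => ∃ j, ψ.satInf (fun i => w (i + j)) ∧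
      ∀ j' < j, φ.satInf (fun i => w (i + j'))

/-- Semantics over finite words, at position `i`. -/
def LTLv.satFinAt {σ : Type} : LTLv σ → List σ → ℕ → Prop
  | .atom c, w, i => w[i]? = some c
  | .neg φ, w, i => ¬ φ.satFinAt w i
  | .disj φ ψ, w, i => φ.satFinAt w i ∨ ψ.satFinAt w i
  | .next φ, w, i => i + 1 < w.length ∧ φ.satFinAt w (i + 1)
  | .untl φ ψ, w, i => ∃ j, i ≤ j ∧ j < w.length ∧ ψ.satFinAt w j ∧
      ∀ j', i ≤ j' → j' < j → φ.satFinAt w j'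

/-- A finite word satisfies a formula. -/
def LTLv.satFin {σ : Type} (φ : LTLv σ) (w : List σ) : Prop := φ.satFinAt w 0

/-- Concatenation of a finite word with an infinite word. -/
def catInf {σ : Type} (u : List σ) (v : ℕ → σ) : ℕ → σ :=
  fun j => if h : j < u.length then u.get ⟨j, h⟩ else v (j - u.length)

/-! Every LTL formula `φ` splits uniformly along concatenation: there are finitely many pairs
`(αᵢ, βᵢ)` such that the `βᵢ` cover all infinite words and, whenever `v` satisfies `βᵢ`, the word
`u · v` satisfies `φ` iff the finite word `u` satisfies `αᵢ`. This goes by induction on `φ`: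
negation negates the `αᵢ`, disjunction takes the common refinement of the two covers, and for
`X φ` and `φ U ψ` one further splits each `βᵢ` according to whether `v` itself satisfies the
formula, since `φ U ψ` holds at `u · v` iff it is witnessed inside `u`, or `φ` holds all along `u`
and `φ U ψ` holds at `v`. Conjoining the `αᵢ` with "every letter is in `Σ₁`" and the `βᵢ` with
"every letter is in `Σ₂`" gives the required family, since `L ⊆ Σ₁*·Σ₂^ω`. -/

section catInf

variable {σ : Type}

@[simp] theorem catInf_nil (v : ℕ → σ) : catInf [] v = v := by
  funext j; simp [catInf]

@[simp] theorem catInf_cons_zero (a : σ) (u : List σ) (v : ℕ → σ) : catInf (a :: u) v 0 = a := by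
  simp [catInf]

theorem catInf_add_of_le (u : List σ) (v : ℕ → σ) {j : ℕ} (hj : j ≤ u.length) :
    (fun i => catInf u v (i + j)) = catInf (u.drop j) v := by
  funext i
  by_cases h : i + j < u.length
  · simp [catInf, h, show i < u.length - j by omega, show j + i = i + j by omega]
  · simp [catInf, h, show ¬ i < u.length - j by omega,
      show i + j - u.length = i - (u.length - j) by omega]

theorem catInf_add_one_cons (a : σ) (u : List σ) (v : ℕ → σ) :
    (fun i => catInf (a :: u) v (i + 1)) = catInf u v := by
  simpa using catInf_add_of_le (a :: u) v (j := 1) (by simp)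

theorem catInf_add_length_add (u : List σ) (v : ℕ → σ) (t : ℕ) :
    (fun i => catInf u v (i + (u.length + t))) = fun i => v (i + t) := by
  funext i
  simp [catInf, show ¬ i + (u.length + t) < u.length by omega,
    show i + (u.length + t) - u.length = i + t by omega]

end catInf

namespace LTLv

variable {σ : Type}

theorem nonempty (φ : LTLv σ) : Nonempty σ := by
  induction φ with
  | atom c => exact ⟨c⟩
  | _ => assumption

theorem satFinAt_drop (φ : LTLv σ) (u : List σ) (j : ℕ) :
    ∀ i, φ.satFinAt (u.drop j) i ↔ φ.satFinAt u (j + i) := by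
  induction φ with
  | atom c => intro i; simp [satFinAt]
  | neg φ ih => intro i; simp [satFinAt, ih]
  | disj φ ψ ihφ ihψ => intro i; simp [satFinAt, ihφ, ihψ]
  | next φ ih =>
    intro i
    simp only [satFinAt, ih, List.length_drop, ← add_assoc]
    exact and_congr_left fun _ => by omega
  | untl φ ψ ihφ ihψ =>
    intro i
    simp only [satFinAt, ihφ, ihψ, List.length_drop]
    constructor
    · rintro ⟨k, hik, hku, hψ, hφ⟩
      refine ⟨j + k, by omega, by omega, hψ, fun m him hmk => ?_⟩
      simpa [show j + (m - j) = m by omega] using hφ (m - j) (by omega) (by omega)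
    · rintro ⟨m, him, hmu, hψ, hφ⟩
      refine ⟨m - j, by omega, by omega, by rwa [show j + (m - j) = m by omega], ?_⟩
      exact fun k hik hkm => hφ (j + k) (by omega) (by omega)

theorem satFin_drop (φ : LTLv σ) (u : List σ) (j : ℕ) :
    φ.satFin (u.drop j) ↔ φ.satFinAt u j := by
  simpa [satFin] using φ.satFinAt_drop u j 0

theorem satInf_next_catInf_cons (φ : LTLv σ) (a : σ) (u : List σ) (v : ℕ → σ) :
    (next φ).satInf (catInf (a :: u) v) ↔ φ.satInf (catInf u v) := by
  rw [satInf, catInf_add_one_cons]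

def conj (φ ψ : LTLv σ) : LTLv σ := neg (disj (neg φ) (neg ψ))

@[simp] theorem satFinAt_conj (φ ψ : LTLv σ) (u : List σ) (i : ℕ) :
    (conj φ ψ).satFinAt u i ↔ φ.satFinAt u i ∧ ψ.satFinAt u i := by
  simp [conj, satFinAt]

@[simp] theorem satFin_conj (φ ψ : LTLv σ) (u : List σ) :
    (conj φ ψ).satFin u ↔ φ.satFin u ∧ ψ.satFin u :=
  satFinAt_conj φ ψ u 0

@[simp] theorem satInf_conj (φ ψ : LTLv σ) (v : ℕ → σ) :
    (conj φ ψ).satInf v ↔ φ.satInf v ∧ ψ.satInf v := by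
  simp [conj, satInf]

section Inhabited

variable [Inhabited σ]

def top : LTLv σ := disj (atom default) (neg (atom default))

def always (φ : LTLv σ) : LTLv σ := neg (untl top (neg φ))

def hasLetter : LTLv σ := untl top top

def anyOf (l : List σ) : LTLv σ := l.foldr (fun c φ => disj (atom c) φ) (neg top)

@[simp] theorem satFinAt_top (u : List σ) (i : ℕ) : (top : LTLv σ).satFinAt u i := by
  simp only [top, satFinAt]; tauto

@[simp] theorem satInf_top (v : ℕ → σ) : (top : LTLv σ).satInf v := by
  simp only [top, satInf]; tauto

@[simp] theorem satFinAt_hasLetter (u : List σ) (i : ℕ) :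
    (hasLetter : LTLv σ).satFinAt u i ↔ i < u.length := by
  simp only [hasLetter, satFinAt, satFinAt_top, true_and]
  exact ⟨fun ⟨j, hij, hj, _⟩ => by omega, fun h => ⟨i, le_rfl, h, fun _ _ _ => trivial⟩⟩

theorem satFin_always (φ : LTLv σ) (u : List σ) :
    (always φ).satFin u ↔ ∀ j < u.length, φ.satFinAt u j := by
  simp [always, satFin, satFinAt]

theorem satInf_always (φ : LTLv σ) (v : ℕ → σ) :
    (always φ).satInf v ↔ ∀ j, φ.satInf (fun i => v (i + j)) := by
  simp [always, satInf]

theorem satFinAt_anyOf (l : List σ) (u : List σ) (i : ℕ) :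
    (anyOf l).satFinAt u i ↔ ∃ h : i < u.length, u[i] ∈ l := by
  induction l with
  | nil => simp [anyOf, satFinAt]
  | cons c l ih =>
    simp only [anyOf, List.foldr_cons, satFinAt] at ih ⊢
    rw [ih, List.getElem?_eq_some_iff]
    grind

theorem satInf_anyOf (l : List σ) (v : ℕ → σ) : (anyOf l).satInf v ↔ v 0 ∈ l := by
  induction l with
  | nil => simp [anyOf, satInf]
  | cons c l ih => simp_all [anyOf, satInf]

theorem exists_satFin_iff_forall_mem {S : Set σ} (hS : S.Finite) :
    ∃ A : LTLv σ, ∀ u, A.satFin u ↔ ∀ x ∈ u, x ∈ S := by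
  refine ⟨always (anyOf hS.toFinset.toList), fun u => ?_⟩
  simp only [satFin_always, satFinAt_anyOf, Finset.mem_toList, Set.Finite.mem_toFinset,
    List.forall_mem_iff_getElem]
  exact forall₂_congr fun j hj => exists_prop_of_true hj

theorem exists_satInf_iff_forall_mem {S : Set σ} (hS : S.Finite) :
    ∃ A : LTLv σ, ∀ v, A.satInf v ↔ ∀ j, v j ∈ S := by
  refine ⟨always (anyOf hS.toFinset.toList), fun v => ?_⟩
  simp [satInf_always, satInf_anyOf]

theorem exists_satFin_cons_iff (φ : LTLv σ) :
    ∃ ψ : LTLv σ, ¬ ψ.satFin [] ∧ ∀ a u, ψ.satFin (a :: u) ↔ φ.satFin u := by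
  have hnext (a : σ) (u : List σ) : (next φ).satFin (a :: u) ↔ u ≠ [] ∧ φ.satFin u := by
    rw [satFin, satFinAt, ← satFin_drop]
    simp [List.length_pos_iff]
  obtain ⟨single, hsingle⟩ : ∃ ψ : LTLv σ, ∀ u, ψ.satFin u ↔ u.length = 1 :=
    ⟨conj hasLetter (neg (next top)), fun u => by simp [satFin, satFinAt]; omega⟩
  -- `next φ` fails at the last letter, so one-letter words need `φ`'s value on `[]` hard-coded
  by_cases hnil : φ.satFin []
  · refine ⟨disj (next φ) single, ?_, fun a u => ?_⟩
    · simpa [satFin, satFinAt] using hsingle []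
    · change (next φ).satFin (a :: u) ∨ single.satFin (a :: u) ↔ _
      rw [hnext, hsingle]
      cases u <;> simp_all
  · refine ⟨next φ, by simp [satFin, satFinAt], fun a u => ?_⟩
    rw [hnext]
    cases u <;> simp_all

end Inhabited

theorem satInf_untl_catInf [Inhabited σ] {φ ψ α α' : LTLv σ} {v : ℕ → σ}
    (hφ : ∀ x, φ.satInf (catInf x v) ↔ α.satFin x) (hψ : ∀ x, ψ.satInf (catInf x v) ↔ α'.satFin x)
    (u : List σ) :
    (untl φ ψ).satInf (catInf u v) ↔
      (untl α α').satFin u ∨ (always α).satFin u ∧ (untl φ ψ).satInf v := by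
  have inside {χ γ : LTLv σ} (h : ∀ x, χ.satInf (catInf x v) ↔ γ.satFin x) {j : ℕ}
      (hj : j ≤ u.length) : χ.satInf (fun i => catInf u v (i + j)) ↔ γ.satFinAt u j := by
    rw [catInf_add_of_le u v hj, h, satFin_drop]
  have beyond (χ : LTLv σ) (t : ℕ) :
      χ.satInf (fun i => catInf u v (i + (u.length + t))) ↔ χ.satInf (fun i => v (i + t)) := by
    rw [catInf_add_length_add]
  rw [satFin_always]
  simp only [satInf, satFin, satFinAt]
  constructor
  · rintro ⟨j, hjψ, hjφ⟩
    by_cases hj : j < u.length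
    · exact .inl ⟨j, Nat.zero_le _, hj, (inside hψ hj.le).1 hjψ,
        fun k _ hk => (inside hφ (by omega)).1 (hjφ k hk)⟩
    · obtain ⟨t, rfl⟩ := Nat.exists_eq_add_of_le (not_lt.1 hj)
      exact .inr ⟨fun k hk => (inside hφ hk.le).1 (hjφ k (by omega)),
        t, (beyond ψ t).1 hjψ, fun s hs => (beyond φ s).1 (hjφ _ (by omega))⟩
  · rintro (⟨j, -, hj, hjψ, hjφ⟩ | ⟨hα, t, htψ, htφ⟩)
    · exact ⟨j, (inside hψ hj.le).2 hjψ,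
        fun k hk => (inside hφ (by omega)).2 (hjφ k (Nat.zero_le _) hk)⟩
    · refine ⟨u.length + t, (beyond ψ t).2 htψ, fun k hk => ?_⟩
      by_cases hku : k < u.length
      · exact (inside hφ hku.le).2 (hα k hku)
      · obtain ⟨s, rfl⟩ := Nat.exists_eq_add_of_le (not_lt.1 hku)
        exact (beyond φ s).2 (htφ s (by omega))

def Splittable (φ : LTLv σ) : Prop :=
  ∃ (ι : Type) (_ : Finite ι) (α β : ι → LTLv σ), (∀ v, ∃ i, (β i).satInf v) ∧
    ∀ i v, (β i).satInf v → ∀ u, φ.satInf (catInf u v) ↔ (α i).satFin u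

theorem Splittable.of_cases {φ : LTLv σ} {ι : Type} [Finite ι] {β : ι → LTLv σ}
    (hβ : ∀ v, ∃ i, (β i).satInf v) (χ : LTLv σ) (f g : ι → LTLv σ)
    (hf : ∀ i v, (β i).satInf v → χ.satInf v → ∀ u, φ.satInf (catInf u v) ↔ (f i).satFin u)
    (hg : ∀ i v, (β i).satInf v → ¬ χ.satInf v → ∀ u, φ.satInf (catInf u v) ↔ (g i).satFin u) :
    Splittable φ := by
  refine ⟨ι × Bool, inferInstance, fun p => cond p.2 (f p.1) (g p.1),
    fun p => conj (β p.1) (cond p.2 χ (neg χ)), fun v => ?_, ?_⟩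
  · obtain ⟨i, hi⟩ := hβ v
    by_cases hχ : χ.satInf v
    · exact ⟨(i, true), by simp [hi, hχ]⟩
    · exact ⟨(i, false), by simp [satInf, hi, hχ]⟩
  · rintro ⟨i, _ | _⟩ v hv
    · simp only [cond_false, satInf_conj, satInf] at hv
      exact hg i v hv.1 hv.2
    · simp only [cond_true, satInf_conj] at hv
      exact hf i v hv.1 hv.2

theorem splittable_atom [Inhabited σ] (c : σ) : Splittable (atom c) := by
  refine Splittable.of_cases (β := fun _ : Unit => top) (fun _ => ⟨(), satInf_top _⟩) (atom c)
    (fun _ => disj (atom c) (neg hasLetter)) (fun _ => atom c) ?_ ?_ <;>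
    rintro - v - hc (_ | ⟨a, u⟩) <;> simp_all [satInf, satFin, satFinAt]

theorem Splittable.neg {φ : LTLv σ} (h : Splittable φ) : Splittable (neg φ) := by
  obtain ⟨ι, _, α, β, hβ, hα⟩ := h
  exact ⟨ι, inferInstance, fun i => .neg (α i), β, hβ, fun i v hv u => not_congr (hα i v hv u)⟩

theorem Splittable.disj {φ ψ : LTLv σ} (hφ : Splittable φ) (hψ : Splittable ψ) :
    Splittable (disj φ ψ) := by
  obtain ⟨ι, _, α, β, hβ, hα⟩ := hφ
  obtain ⟨κ, _, α', β', hβ', hα'⟩ := hψ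
  refine ⟨ι × κ, inferInstance, fun p => .disj (α p.1) (α' p.2), fun p => conj (β p.1) (β' p.2),
    fun v => ?_, fun p v hv u => ?_⟩
  · obtain ⟨i, hi⟩ := hβ v
    obtain ⟨j, hj⟩ := hβ' v
    exact ⟨(i, j), (satInf_conj _ _ _).2 ⟨hi, hj⟩⟩
  · rw [satInf_conj] at hv
    exact or_congr (hα p.1 v hv.1 u) (hα' p.2 v hv.2 u)

theorem Splittable.next [Inhabited σ] {φ : LTLv σ} (h : Splittable φ) : Splittable (next φ) := by
  obtain ⟨ι, _, α, β, hβ, hα⟩ := h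
  choose γ hγnil hγcons using fun i => exists_satFin_cons_iff (α i)
  refine Splittable.of_cases hβ φ.next (fun i => .disj (γ i) hasLetter.neg) γ ?_ ?_
  · rintro i v hv hχ (_ | ⟨a, u⟩)
    · simp [hχ, satFin, satFinAt]
    · rw [satInf_next_catInf_cons, hα i v hv, ← hγcons i a]
      simp [satFin, satFinAt]
  · rintro i v hv hχ (_ | ⟨a, u⟩)
    · simpa [hγnil] using hχ
    · rw [satInf_next_catInf_cons, hα i v hv, hγcons]

theorem Splittable.untl [Inhabited σ] {φ ψ : LTLv σ} (hφ : Splittable φ) (hψ : Splittable ψ) :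
    Splittable (untl φ ψ) := by
  obtain ⟨ι, _, α, β, hβ, hα⟩ := hφ
  obtain ⟨κ, _, α', β', hβ', hα'⟩ := hψ
  refine Splittable.of_cases (β := fun p : ι × κ => conj (β p.1) (β' p.2)) (fun v => ?_)
    (φ.untl ψ) (fun p => .disj ((α p.1).untl (α' p.2)) (α p.1).always)
    (fun p => (α p.1).untl (α' p.2)) ?_ ?_
  · obtain ⟨i, hi⟩ := hβ v
    obtain ⟨j, hj⟩ := hβ' v
    exact ⟨(i, j), (satInf_conj _ _ _).2 ⟨hi, hj⟩⟩
  · rintro ⟨i, j⟩ v hv hχ u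
    rw [satInf_conj] at hv
    rw [satInf_untl_catInf (hα i v hv.1) (hα' j v hv.2)]
    simp [hχ, satFin, satFinAt]
  · rintro ⟨i, j⟩ v hv hχ u
    rw [satInf_conj] at hv
    rw [satInf_untl_catInf (hα i v hv.1) (hα' j v hv.2)]
    simp [hχ]

theorem splittable [Inhabited σ] (φ : LTLv σ) : Splittable φ := by
  induction φ with
  | atom c => exact splittable_atom c
  | neg φ ih => exact ih.neg
  | disj φ ψ ihφ ihψ => exact ihφ.disj ihψ
  | next φ ih => exact ih.next
  | untl φ ψ ihφ ihψ => exact ihφ.untl ihψ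

end LTLv

theorem ltl_split_concatenation_general (σ : Type) (S₁ S₂ : Set σ)
    (hfin₁ : S₁.Finite) (hfin₂ : S₂.Finite)
    (L : Set (ℕ → σ)) (φ : LTLv σ) (hLφ : ∀ w, w ∈ L ↔ φ.satInf w)
    (hL : ∀ w ∈ L, ∃ (u : List σ) (v : ℕ → σ), w = catInf u v ∧
      (∀ x ∈ u, x ∈ S₁) ∧ (∀ j, v j ∈ S₂)) :
    ∃ (k : ℕ) (φ₁ φ₂ : Fin k → LTLv σ),
      (∀ i, ∀ u : List σ, (φ₁ i).satFin u → ∀ x ∈ u, x ∈ S₁) ∧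
      (∀ i, ∀ v : ℕ → σ, (φ₂ i).satInf v → ∀ j, v j ∈ S₂) ∧
      (∀ w, w ∈ L ↔ ∃ (i : Fin k) (u : List σ) (v : ℕ → σ),
        w = catInf u v ∧ (φ₁ i).satFin u ∧ (φ₂ i).satInf v) := by
  have : Inhabited σ := ⟨Classical.choice φ.nonempty⟩
  obtain ⟨ι, _, α, β, hβ, hα⟩ := φ.splittable
  obtain ⟨A₁, hA₁⟩ := LTLv.exists_satFin_iff_forall_mem hfin₁
  obtain ⟨A₂, hA₂⟩ := LTLv.exists_satInf_iff_forall_mem hfin₂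
  let e := Finite.equivFin ι
  refine ⟨Nat.card ι, fun i => (α (e.symm i)).conj A₁, fun i => (β (e.symm i)).conj A₂,
    fun i u hu => (hA₁ u).1 ((LTLv.satFin_conj _ _ _).1 hu).2,
    fun i v hv => (hA₂ v).1 ((LTLv.satInf_conj _ _ _).1 hv).2, fun w => ⟨fun hw => ?_, ?_⟩⟩
  · obtain ⟨u, v, rfl, hu, hv⟩ := hL w hw
    obtain ⟨i, hi⟩ := hβ v
    refine ⟨e i, u, v, rfl, ?_, ?_⟩ <;>
      simp only [Equiv.symm_apply_apply, LTLv.satFin_conj, LTLv.satInf_conj]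
    · exact ⟨(hα i v hi u).1 ((hLφ _).1 hw), (hA₁ u).2 hu⟩
    · exact ⟨hi, (hA₂ v).2 hv⟩
  · rintro ⟨i, u, v, rfl, hu, hv⟩
    rw [LTLv.satFin_conj] at hu
    rw [LTLv.satInf_conj] at hv
    exact (hLφ _).2 ((hα _ v hv.1 u).2 hu.1)

/-- **Splitting LTL languages in `Σ₁* · Σ₂^ω`**: if an LTL-definable language of
infinite words is contained in `Σ₁* · Σ₂^ω` for disjoint finite alphabets, then
it is a finite union of concatenations `L(φᵢ¹) · L(φᵢ²)` with `L(φᵢ¹) ⊆ Σ₁*` and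
`L(φᵢ²) ⊆ Σ₂^ω`. -/
theorem ltl_split_concatenation (σ : Type) (S₁ S₂ : Set σ)
    (hfin₁ : S₁.Finite) (hfin₂ : S₂.Finite) (hdis : Disjoint S₁ S₂)
    (L : Set (ℕ → σ)) (φ : LTLv σ) (hLφ : ∀ w, w ∈ L ↔ φ.satInf w)
    (hL : ∀ w ∈ L, ∃ (u : List σ) (v : ℕ → σ), w = catInf u v ∧
      (∀ x ∈ u, x ∈ S₁) ∧ (∀ j, v j ∈ S₂)) :
    ∃ (k : ℕ) (φ₁ φ₂ : Fin k → LTLv σ),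
      (∀ i, ∀ u : List σ, (φ₁ i).satFin u → ∀ x ∈ u, x ∈ S₁) ∧
      (∀ i, ∀ v : ℕ → σ, (φ₂ i).satInf v → ∀ j, v j ∈ S₂) ∧
      (∀ w, w ∈ L ↔ ∃ (i : Fin k) (u : List σ) (v : ℕ → σ),
        w = catInf u v ∧ (φ₁ i).satFin u ∧ (φ₂ i).satInf v) :=
  ltl_split_concatenation_general σ S₁ S₂ hfin₁ hfin₂ L φ hLφ hL
end

section
/- There exists a HyperLTL sentence φ_bounded over AP ∪ {$} of the form ∀π,π′.ψ with ψ quantifier-free (a Π₁-sentence) such that for every set T of traces over AP ∪ {$}: T ⊨ φ_bounded if and only if T is bounded, i.e. there exists b ∈ ℕ such that every trace t ∈ T satisfies t(i) ⊆ AP for all i < b and t(i) = {$} for all i ≥ b. -/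
/-- A set of traces over `AP ∪ {$}` (with `$` rendered as `none`) is bounded:
for some `b`, every trace consists of `b` letters in `2^AP` followed by `{$}^ω`. -/
def BoundedTraces {AP : Type} (T : Set (Trace (Option AP))) : Prop :=
  ∃ b : ℕ, ∀ t ∈ T, (∀ i < b, none ∉ t i) ∧ ∀ i, b ≤ i → t i = {none}

/-! The formula says of each pair of traces `π, π'` that `π` is a word over `2^AP` followed by
`{$}^ω`, and that `$` holds on `π` and on `π'` at the same positions. The first conjunct, taken
for `π = π'`, pads every trace from some position on; the second forces all these positions to
coincide, since a padded trace carries `$` exactly from its padding position on.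
Finiteness of `AP` is what lets a single formula express `t(i) = {$}`. -/

namespace QF

variable {X : Type}

def conj_s11 (p q : QF X) : QF X := neg (disj (neg p) (neg q))

def iff (p q : QF X) : QF X := conj_s11 (disj (neg p) q) (disj (neg q) p)

/-- `G p`, written as `¬ (⊤ U ¬p)` with `⊤ := p ∨ ¬p`, since the syntax has no constants. -/
def always (p : QF X) : QF X := neg (untl (disj p (neg p)) (neg p))

@[simp]
theorem sat_conj (p q : QF X) (A : ℕ → Trace X) : (conj_s11 p q).sat A ↔ p.sat A ∧ q.sat A := by
  simp [conj_s11, sat]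

@[simp]
theorem sat_iff (p q : QF X) (A : ℕ → Trace X) : (iff p q).sat A ↔ (p.sat A ↔ q.sat A) := by
  simp only [iff, sat_conj, sat]
  tauto

@[simp]
theorem sat_always (p : QF X) (A : ℕ → Trace X) :
    (always p).sat A ↔ ∀ j, p.sat (shiftAsg A j) := by
  simp only [always, sat, not_exists, not_and]
  exact ⟨fun h j => by_contra fun hj => h j hj fun _ _ => em _, fun h j hj => (hj (h j)).elim⟩

theorem sat_atom_shiftAsg (a : X) (x j : ℕ) (A : ℕ → Trace X) :
    (atom a x).sat (shiftAsg A j) ↔ a ∈ A x j := by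
  simp [sat, shiftAsg, Trace.shift]

@[simp]
theorem freeVars_conj (p q : QF X) : (conj_s11 p q).freeVars = p.freeVars ∪ q.freeVars := rfl

@[simp]
theorem freeVars_iff (p q : QF X) : (iff p q).freeVars = p.freeVars ∪ q.freeVars := by
  simp [iff, freeVars, Set.union_comm]

@[simp]
theorem freeVars_always (p : QF X) : (always p).freeVars = p.freeVars := by
  simp [always, freeVars]

end QF

theorem isSentence_all_all_qf_iff {X : Type} (x y : ℕ) (ψ : QF X) :
    (HFormula.all x (HFormula.all y (HFormula.qf ψ))).IsSentence ↔ ψ.freeVars ⊆ {x, y} := by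
  simp only [HFormula.IsSentence, HFormula.freeVars, Set.sdiff_sdiff, Set.sdiff_eq_empty]
  rw [Set.union_comm, ← Set.insert_eq]

theorem hModels_all_all_qf_iff {X : Type} (T : Set (Trace X)) (x y : ℕ) (ψ : QF X) :
    HModels T (HFormula.all x (HFormula.all y (HFormula.qf ψ))) ↔
      ∀ t ∈ T, ∀ t' ∈ T, ψ.sat (Function.update (Function.update (fun _ _ => ∅) x t) y t') :=
  Iff.rfl

section Padding

variable {AP : Type}

def PaddedAt (t : Trace (Option AP)) (b : ℕ) : Prop :=
  (∀ i < b, none ∉ t i) ∧ ∀ i, b ≤ i → t i = {none}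

theorem PaddedAt.none_mem_iff {t : Trace (Option AP)} {b : ℕ} (h : PaddedAt t b) (i : ℕ) :
    none ∈ t i ↔ b ≤ i := by
  refine ⟨fun hi => ?_, fun hi => h.2 i hi ▸ rfl⟩
  by_contra hlt
  exact h.1 i (not_le.1 hlt) hi

theorem PaddedAt.eq_of_none_mem_iff {t t' : Trace (Option AP)} {b b' : ℕ} (h : PaddedAt t b)
    (h' : PaddedAt t' b') (hsync : ∀ i, none ∈ t i ↔ none ∈ t' i) : b = b' := by
  have hle : ∀ i, b ≤ i ↔ b' ≤ i := fun i => by rw [← h.none_mem_iff, ← h'.none_mem_iff, hsync]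
  exact le_antisymm ((hle b').2 le_rfl) ((hle b).1 le_rfl)

theorem boundedTraces_iff_forall_pairs (T : Set (Trace (Option AP))) :
    BoundedTraces T ↔ ∀ t ∈ T, ∀ t' ∈ T,
      (∃ b, PaddedAt t b) ∧ ∀ i, (none ∈ t i ↔ none ∈ t' i) := by
  constructor
  · rintro ⟨b, hb : ∀ t ∈ T, PaddedAt t b⟩ t ht t' ht'
    exact ⟨⟨b, hb t ht⟩, fun i => by rw [(hb t ht).none_mem_iff, (hb t' ht').none_mem_iff]⟩
  · intro h
    rcases T.eq_empty_or_nonempty with rfl | ⟨t₀, ht₀⟩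
    · exact ⟨0, by simp⟩
    obtain ⟨b, hb⟩ := (h t₀ ht₀ t₀ ht₀).1
    refine ⟨b, fun t ht => ?_⟩
    obtain ⟨⟨b', hb'⟩, hsync⟩ := h t ht t₀ ht₀
    exact hb'.eq_of_none_mem_iff hb hsync ▸ hb'

end Padding

namespace QF

variable {AP : Type}

def onlyNoneAmong (l : List AP) (x : ℕ) : QF (Option AP) :=
  l.foldr (fun a p => conj_s11 (neg (atom (some a) x)) p) (atom none x)

theorem sat_onlyNoneAmong (l : List AP) (x : ℕ) (A : ℕ → Trace (Option AP)) :
    (onlyNoneAmong l x).sat A ↔ (∀ a ∈ l, some a ∉ A x 0) ∧ none ∈ A x 0 := by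
  induction l with
  | nil => simp [onlyNoneAmong, sat]
  | cons a l ih => simp_all [onlyNoneAmong, sat, and_assoc]

theorem freeVars_onlyNoneAmong (l : List AP) (x : ℕ) : (onlyNoneAmong l x).freeVars = {x} := by
  induction l with
  | nil => rfl
  | cons a l ih => simp_all [onlyNoneAmong, freeVars]

variable [Fintype AP]

noncomputable def onlyNone (x : ℕ) : QF (Option AP) := onlyNoneAmong Finset.univ.toList x

theorem sat_onlyNone (x : ℕ) (A : ℕ → Trace (Option AP)) :
    (onlyNone x).sat A ↔ A x 0 = {none} := by
  rw [onlyNone, sat_onlyNoneAmong, Set.eq_singleton_iff_unique_mem]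
  simp [Option.forall, and_comm]

noncomputable def padded (x : ℕ) : QF (Option AP) := untl (neg (atom none x)) (always (onlyNone x))

theorem sat_padded (x : ℕ) (A : ℕ → Trace (Option AP)) :
    (padded x).sat A ↔ ∃ b, PaddedAt (A x) b := by
  simp only [padded, sat, sat_always, sat_onlyNone, PaddedAt, shiftAsg, Trace.shift, zero_add]
  refine exists_congr fun b => and_comm.trans (and_congr_right' ⟨fun h i hi => ?_, fun h k => ?_⟩)
  · simpa [Nat.sub_add_cancel hi] using h (i - b)
  · exact h (k + b) (Nat.le_add_left b k)

noncomputable def boundedPair (x y : ℕ) : QF (Option AP) :=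
  conj_s11 (padded x) (always (iff (atom none x) (atom none y)))

theorem sat_boundedPair (x y : ℕ) (A : ℕ → Trace (Option AP)) :
    (boundedPair x y).sat A ↔ (∃ b, PaddedAt (A x) b) ∧ ∀ i, (none ∈ A x i ↔ none ∈ A y i) := by
  simp [boundedPair, sat_padded, sat_atom_shiftAsg]

theorem freeVars_boundedPair (x y : ℕ) : (boundedPair (AP := AP) x y).freeVars = {x, y} := by
  simp [boundedPair, padded, freeVars, onlyNone, freeVars_onlyNoneAmong, Set.pair_comm]

end QF

/-- **Definability of boundedness by a Π₁-sentence**: there is a HyperLTL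
sentence of the form `∀π.∀π'. ψ` with `ψ` quantifier-free whose models are
exactly the bounded sets of traces. -/
theorem bounded_definable_Pi1 (AP : Type) [Fintype AP] :
    ∃ (x y : ℕ) (ψ : QF (Option AP)),
      (HFormula.all x (HFormula.all y (HFormula.qf ψ))).IsSentence ∧
      ∀ T : Set (Trace (Option AP)),
        HModels T (HFormula.all x (HFormula.all y (HFormula.qf ψ))) ↔
          BoundedTraces T := by
  refine ⟨0, 1, QF.boundedPair 0 1, ?_, fun T => ?_⟩
  · rw [isSentence_all_all_qf_iff, QF.freeVars_boundedPair]
  · rw [hModels_all_all_qf_iff, boundedTraces_iff_forall_pairs]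
    simp [QF.sat_boundedPair]
end

section
/- Every satisfiable HyperCTL* sentence has a model whose set of vertices has cardinality at most 𝔠, the cardinality of the continuum. -/
/-! ### Transition systems and HyperCTL* -/

/-- A transition system over `AP`: every vertex has an outgoing edge. -/
structure TS (AP : Type) : Type 1 where
  V : Type
  E : V → V → Prop
  vI : V
  lab : V → Set AP
  succ : ∀ v, ∃ w, E v w

/-- A path through a transition system. -/
def TS.IsPath {AP : Type} (S : TS AP) (ρ : ℕ → S.V) : Prop :=
  ∀ i, S.E (ρ i) (ρ (i + 1))

/-- HyperCTL* formulas; path variables are natural numbers. -/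
inductive CTL (AP : Type) : Type where
  | atom : AP → ℕ → CTL AP
  | neg  : CTL AP → CTL AP
  | disj : CTL AP → CTL AP → CTL AP
  | next : CTL AP → CTL AP
  | untl : CTL AP → CTL AP → CTL AP
  | ex   : ℕ → CTL AP → CTL AP
  | all  : ℕ → CTL AP → CTL AP

/-- Semantics of HyperCTL* w.r.t. a path assignment `As` and the variable `r`
most recently added to the assignment: quantified paths start at the first
vertex of the most recently assigned path. -/
def CTL.sat {AP : Type} (S : TS AP) : CTL AP → (ℕ → ℕ → S.V) → ℕ → Prop
  | .atom a x, As, _ => a ∈ S.lab (As x 0)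
  | .neg φ, As, r => ¬ φ.sat S As r
  | .disj φ ψ, As, r => φ.sat S As r ∨ ψ.sat S As r
  | .next φ, As, r => φ.sat S (fun x i => As x (i + 1)) r
  | .untl φ ψ, As, r =>
      ∃ j, ψ.sat S (fun x i => As x (i + j)) r ∧
        ∀ j' < j, φ.sat S (fun x i => As x (i + j')) r
  | .ex x φ, As, r => ∃ ρ : ℕ → S.V, S.IsPath ρ ∧ ρ 0 = As r 0 ∧
      φ.sat S (Function.update As x ρ) x
  | .all x φ, As, r => ∀ ρ : ℕ → S.V, S.IsPath ρ → ρ 0 = As r 0 →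
      φ.sat S (Function.update As x ρ) x

def CTL.freeVars {AP : Type} : CTL AP → Set ℕ
  | .atom _ x => {x}
  | .neg φ => φ.freeVars
  | .disj φ ψ => φ.freeVars ∪ ψ.freeVars
  | .next φ => φ.freeVars
  | .untl φ ψ => φ.freeVars ∪ ψ.freeVars
  | .ex x φ => φ.freeVars \ {x}
  | .all x φ => φ.freeVars \ {x}

/-- Every temporal operator occurs in the scope of a path quantifier. -/
def CTL.guarded {AP : Type} : CTL AP → Prop
  | .atom _ _ => True
  | .neg φ => φ.guarded
  | .disj φ ψ => φ.guarded ∧ ψ.guarded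
  | .next _ => False
  | .untl _ _ => False
  | .ex _ _ => True
  | .all _ _ => True

/-- A HyperCTL* sentence: no free variables and all temporal operators occur
under a path quantifier. -/
def CTL.IsSentence {AP : Type} (φ : CTL AP) : Prop := φ.freeVars = ∅ ∧ φ.guarded

/-- `S ⊨ φ`: satisfaction w.r.t. the empty assignment, i.e. quantification of
the first path starts at the initial vertex (for sentences the choice of the
initial dummy path is irrelevant). -/
def CModels {AP : Type} (S : TS AP) (φ : CTL AP) : Prop :=
  ∀ ρ : ℕ → S.V, S.IsPath ρ → ρ 0 = S.vI → φ.sat S (fun _ => ρ) 0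

/-! Downward Löwenheim–Skolem for HyperCTL*. Close `{vI}` under Skolem functions: for each
quantified subformula `∃x. ψ` (and `∃x. ¬ψ`, for universal quantifiers) and each assignment of
paths through the current set, add the vertices of a witness path, if `S` has one. An assignment
is countably many vertices, so this is a closure under operations of countable arity, which
stabilises after `ω₁` stages at a set `U` of size at most `𝔠 ^ ℵ₀ = 𝔠`. Restricting `S` to `U`
changes no truth value, because every path the restricted system lacks is matched, as far as
the formula can tell, by a witness it contains. -/

open Cardinal Ordinal

section CountableClosure

variable {α ι β : Type} (f : ι → (β → α) → α) (s : Set α)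

def countableClosureStage (i : Ordinal.{0}) : Set α :=
  s ∪ Set.range fun p : ι × (β → ⋃ j < i, countableClosureStage j) => f p.1 fun b => p.2 b
termination_by i

noncomputable def countableClosure : Set α := ⋃ i < ω₁, countableClosureStage f s i

theorem subset_countableClosure : s ⊆ countableClosure f s := fun a ha =>
  Set.mem_iUnion₂.2 ⟨0, omega_pos 1, by rw [countableClosureStage]; exact Or.inl ha⟩

theorem apply_mem_countableClosure [Countable β] (k : ι) {g : β → α}
    (hg : ∀ b, g b ∈ countableClosure f s) : f k g ∈ countableClosure f s := by
  choose i hi hgi using fun b => Set.mem_iUnion₂.1 (hg b)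
  refine Set.mem_iUnion₂.2 ⟨⨆ b, i b + 1, Ordinal.iSup_lt_omega_one fun b =>
    (isSuccLimit_omega 1).succ_lt (hi b), ?_⟩
  rw [countableClosureStage]
  exact Or.inr ⟨(k, fun b => ⟨g b, Set.mem_iUnion₂.2 ⟨i b, Ordinal.lt_iSup_add_one i b, hgi b⟩⟩), rfl⟩

variable {f s}

theorem mk_biUnion_countableClosureStage_le {i : Ordinal.{0}} (hi : i ≤ ω₁)
    (h : ∀ j < i, #(countableClosureStage f s j) ≤ 𝔠) :
    #(⋃ j < i, countableClosureStage f s j) ≤ 𝔠 := by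
  refine mk_biUnion_le_of_le ?_ aleph0_le_continuum _ h
  calc i.card ≤ (ω₁ : Ordinal.{0}).card := card_le_card hi
    _ = ℵ₁ := card_omega 1
    _ ≤ 𝔠 := aleph_one_le_continuum

theorem mk_countableClosureStage_le [Countable β] (hι : #ι ≤ 𝔠) (hs : #s ≤ 𝔠) {i : Ordinal.{0}}
    (hi : i ≤ ω₁) : #(countableClosureStage f s i) ≤ 𝔠 := by
  induction i using WellFoundedLT.induction with
  | ind i ih =>
    set T := ⋃ j < i, countableClosureStage f s j
    have hT : #T ≤ 𝔠 :=
      mk_biUnion_countableClosureStage_le hi fun j hj => ih j hj (hj.le.trans hi)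
    have hfun : #(β → T) ≤ 𝔠 := by
      rw [mk_arrow, Cardinal.lift_id, Cardinal.lift_id]
      calc #T ^ #β ≤ 𝔠 ^ ℵ₀ :=
            (power_le_power_right hT).trans (power_le_power_left continuum_ne_zero mk_le_aleph0)
        _ = 𝔠 := continuum_power_aleph0
    rw [countableClosureStage]
    calc _ ≤ #s + #(ι × (β → T)) := (mk_union_le _ _).trans (add_le_add le_rfl mk_range_le)
      _ ≤ 𝔠 + 𝔠 * 𝔠 := by rw [mk_prod, Cardinal.lift_id, Cardinal.lift_id]; gcongr
      _ = 𝔠 := by simp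

theorem mk_countableClosure_le [Countable β] (hι : #ι ≤ 𝔠) (hs : #s ≤ 𝔠) :
    #(countableClosure f s) ≤ 𝔠 :=
  mk_biUnion_countableClosureStage_le le_rfl fun _ hj => mk_countableClosureStage_le hι hs hj.le

end CountableClosure

namespace TS

variable {AP : Type} (S : TS AP)

noncomputable def pathFrom (v : S.V) : ℕ → S.V
  | 0 => v
  | n + 1 => (S.succ (pathFrom v n)).choose

theorem isPath_pathFrom (v : S.V) : S.IsPath (S.pathFrom v) :=
  fun n => (S.succ (S.pathFrom v n)).choose_spec

open Classical in
noncomputable def witness (P : (ℕ → S.V) → Prop) (v : S.V) : ℕ → S.V :=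
  if h : ∃ ρ, S.IsPath ρ ∧ ρ 0 = v ∧ P ρ then h.choose else S.pathFrom v

theorem isPath_witness (P : (ℕ → S.V) → Prop) (v : S.V) : S.IsPath (S.witness P v) := by
  unfold witness
  split_ifs with h
  exacts [h.choose_spec.1, S.isPath_pathFrom v]

theorem witness_zero (P : (ℕ → S.V) → Prop) (v : S.V) : S.witness P v 0 = v := by
  unfold witness
  split_ifs with h
  exacts [h.choose_spec.2.1, rfl]

theorem witness_spec {P : (ℕ → S.V) → Prop} {v : S.V} (h : ∃ ρ, S.IsPath ρ ∧ ρ 0 = v ∧ P ρ) :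
    P (S.witness P v) := by
  rw [witness, dif_pos h]
  exact h.choose_spec.2.2

def restrict (U : Set S.V) (hU : ∀ v ∈ U, ∃ w ∈ U, S.E v w) (hI : S.vI ∈ U) : TS AP where
  V := U
  E v w := S.E v w
  vI := ⟨S.vI, hI⟩
  lab v := S.lab v
  succ v := let ⟨w, hw, hvw⟩ := hU v v.2; ⟨⟨w, hw⟩, hvw⟩

def WitnessClosed (U : Set S.V) (ψ : CTL AP) : Prop :=
  ∀ As : ℕ → ℕ → S.V, (∀ x i, As x i ∈ U) → ∀ x r, (CTL.ex x ψ).sat S As r →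
    ∃ ρ, S.IsPath ρ ∧ (∀ n, ρ n ∈ U) ∧ ρ 0 = As r 0 ∧ ψ.sat S (Function.update As x ρ) x

end TS

namespace CTL

variable {AP : Type}

def subformulas : CTL AP → List (CTL AP)
  | atom a x => [atom a x]
  | neg ψ => neg ψ :: ψ.subformulas
  | disj ψ χ => disj ψ χ :: (ψ.subformulas ++ χ.subformulas)
  | next ψ => next ψ :: ψ.subformulas
  | untl ψ χ => untl ψ χ :: (ψ.subformulas ++ χ.subformulas)
  | ex x ψ => ex x ψ :: ψ.subformulas
  | all x ψ => all x ψ :: ψ.subformulas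

theorem mem_subformulas_self (ψ : CTL AP) : ψ ∈ ψ.subformulas := by
  cases ψ <;> simp [subformulas]

variable {S : TS AP} {U : Set S.V} {hU : ∀ v ∈ U, ∃ w ∈ U, S.E v w} {hI : S.vI ∈ U}

theorem sat_val_update {ψ : CTL AP} {As : ℕ → ℕ → U} {x r : ℕ} {ρ : ℕ → U} :
    ψ.sat S (fun y i => (Function.update As x ρ y i : S.V)) r ↔
      ψ.sat S (Function.update (fun y i => (As y i : S.V)) x (fun i => ρ i)) r :=
  Iff.of_eq (congrArg (ψ.sat S · r) (Function.comp_update (fun σ i => (σ i : S.V)) As x ρ))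

theorem sat_restrict_iff (ψ : CTL AP)
    (hψ : ∀ χ ∈ ψ.subformulas, S.WitnessClosed U χ ∧ S.WitnessClosed U χ.neg)
    (As : ℕ → ℕ → U) (r : ℕ) :
    ψ.sat (S.restrict U hU hI) As r ↔ ψ.sat S (fun x i => As x i) r := by
  induction ψ generalizing As r <;>
    simp only [subformulas, List.forall_mem_cons, List.forall_mem_append] at hψ
  case atom => rfl
  case neg ψ ih => exact not_congr (ih hψ.2 As r)
  case disj ψ χ ihψ ihχ => exact or_congr (ihψ hψ.2.1 As r) (ihχ hψ.2.2 As r)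
  case next ψ ih => exact ih hψ.2 _ r
  case untl ψ χ ihψ ihχ =>
    exact exists_congr fun j => and_congr (ihχ hψ.2.2 _ r)
      (forall₂_congr fun j' _ => ihψ hψ.2.1 _ r)
  case ex x ψ ih =>
    constructor
    · rintro ⟨ρ, hρ, hρ0, hsat⟩
      exact ⟨fun n => (ρ n).1, hρ, congrArg Subtype.val hρ0,
        sat_val_update.1 ((ih hψ.2 _ x).1 hsat)⟩
    · intro hex
      obtain ⟨ρ, hρ, hρU, hρ0, hsat⟩ :=
        (hψ.2 ψ ψ.mem_subformulas_self).1 _ (fun y i => (As y i).2) x r hex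
      exact ⟨fun n => ⟨ρ n, hρU n⟩, hρ, Subtype.ext hρ0,
        (ih hψ.2 _ x).2 (sat_val_update.2 hsat)⟩
  case all x ψ ih =>
    constructor
    · intro hall
      by_contra hfalse
      simp only [sat, not_forall] at hfalse
      obtain ⟨ρ, hρ, hρ0, hnot⟩ := hfalse
      obtain ⟨σ, hσ, hσU, hσ0, hσnot⟩ :=
        (hψ.2 ψ ψ.mem_subformulas_self).2 _ (fun y i => (As y i).2) x r ⟨ρ, hρ, hρ0, hnot⟩
      exact hσnot (sat_val_update.1 ((ih hψ.2 _ x).1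
        (hall (fun n => ⟨σ n, hσU n⟩) hσ (Subtype.ext hσ0))))
    · intro hall ρ hρ hρ0
      exact (ih hψ.2 _ x).2 (sat_val_update.2 (hall _ hρ (congrArg Subtype.val hρ0)))

end CTL

namespace TS

variable {AP : Type} (S : TS AP)

/-- The assignment enters uncurried, as a countable family of vertices, so that
`S.witnessOp ψ x r m` is an operation of countable arity on vertices. -/
noncomputable def witnessOp (ψ : CTL AP) (x r m : ℕ) (g : ℕ × ℕ → S.V) : S.V :=
  S.witness (fun ρ => ψ.sat S (Function.update (Function.curry g) x ρ) x) (g (r, 0)) m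

variable {S} {U : Set S.V}

theorem witnessClosed_of_witnessOp_mem {ψ : CTL AP}
    (h : ∀ x r m g, (∀ p, g p ∈ U) → S.witnessOp ψ x r m g ∈ U) : S.WitnessClosed U ψ := by
  intro As hAs x r hex
  exact ⟨_, S.isPath_witness _ _, fun m => h x r m (Function.uncurry As) fun p => hAs p.1 p.2,
    S.witness_zero _ _, S.witness_spec hex⟩

theorem exists_succ_mem_of_witnessOp_mem {ψ : CTL AP}
    (h : ∀ x r m g, (∀ p, g p ∈ U) → S.witnessOp ψ x r m g ∈ U) :
    ∀ v ∈ U, ∃ w ∈ U, S.E v w := by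
  intro v hv
  refine ⟨S.witnessOp ψ 0 0 1 fun _ => v, h 0 0 1 _ fun _ => hv, ?_⟩
  simpa only [witnessOp, witness_zero] using S.isPath_witness _ v 0

variable (S)

theorem exists_witnessClosed_mk_le_continuum (φ : CTL AP) :
    ∃ U : Set S.V, S.vI ∈ U ∧ (∀ v ∈ U, ∃ w ∈ U, S.E v w) ∧
      (∀ χ ∈ φ.subformulas, S.WitnessClosed U χ ∧ S.WitnessClosed U χ.neg) ∧ #U ≤ 𝔠 := by
  let Φ := φ.subformulas ++ φ.subformulas.map CTL.neg
  have : Countable {χ // χ ∈ Φ} := (List.finite_toSet Φ).countable.to_subtype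
  let f : {χ // χ ∈ Φ} × ℕ × ℕ × ℕ → (ℕ × ℕ → S.V) → S.V :=
    fun k => S.witnessOp k.1 k.2.1 k.2.2.1 k.2.2.2
  have hclosed (χ : CTL AP) (hχ : χ ∈ Φ) (x r m : ℕ) (g : ℕ × ℕ → S.V)
      (hg : ∀ p, g p ∈ countableClosure f {S.vI}) :
      S.witnessOp χ x r m g ∈ countableClosure f {S.vI} :=
    apply_mem_countableClosure f {S.vI} (⟨χ, hχ⟩, x, r, m) hg
  refine ⟨countableClosure f {S.vI}, subset_countableClosure f _ rfl,
    exists_succ_mem_of_witnessOp_mem (hclosed φ (by simp [Φ, φ.mem_subformulas_self])),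
    fun χ hχ => ⟨witnessClosed_of_witnessOp_mem (hclosed χ (by simp [Φ, hχ])),
      witnessClosed_of_witnessOp_mem (hclosed χ.neg (by simp [Φ, hχ]))⟩,
    mk_countableClosure_le (mk_le_aleph0.trans aleph0_le_continuum) ?_⟩
  rw [mk_singleton]
  exact one_lt_aleph0.le.trans aleph0_le_continuum

end TS

theorem hyperctl_model_le_continuum_general (AP : Type) (φ : CTL AP)
    (hsat : ∃ S : TS AP, CModels S φ) :
    ∃ S : TS AP, CModels S φ ∧ Cardinal.mk S.V ≤ Cardinal.continuum := by
  obtain ⟨S, hS⟩ := hsat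
  obtain ⟨U, hI, hU, hclosed, hcard⟩ := S.exists_witnessClosed_mk_le_continuum φ
  refine ⟨S.restrict U hU hI, fun ρ hρ hρ0 => ?_, hcard⟩
  exact (φ.sat_restrict_iff hclosed (fun _ => ρ) 0).2 (hS _ hρ (congrArg Subtype.val hρ0))

/-- **Small model property for HyperCTL***: every satisfiable HyperCTL* sentence
has a model whose set of vertices has cardinality at most `𝔠`. -/
theorem hyperctl_model_le_continuum (AP : Type) [Fintype AP] (φ : CTL AP)
    (hφ : φ.IsSentence) (hsat : ∃ S : TS AP, CModels S φ) :
    ∃ S : TS AP, CModels S φ ∧ Cardinal.mk S.V ≤ Cardinal.continuum :=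
  hyperctl_model_le_continuum_general AP φ hsat
end
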